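/- arXiv:2506.08926 — 5 statements merged into one kernel-verified Lean document; each statement's English description precedes it below -/
import Mathlib

section
/- For every finite simple graph G, the odd chromatic number satisfies χ_o(G) ≤ χ(G) · χ_io(G), where χ(G) is the ordinary chromatic number. Equivalently, if G has a proper coloring with s colors and an improper odd coloring with k colors, then G has an odd coloring with s·k colors. -/
/-- If `G` has a proper coloring with `s` colors and an improper odd coloring with `k` colors,
then `G` has an odd coloring with `s * k` colors; that is, `χ_o(G) ≤ χ(G) * χ_io(G)`. -/
theorem oddChromatic_le_chromatic_mul_improperOdd {V : Type} [Fintype V]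
    (G : SimpleGraph V) (s k : ℕ)
    (hproper : ∃ c : V → Fin s, ∀ u v : V, G.Adj u v → c u ≠ c v)
    (hio : ∃ c : V → Fin k, ∀ v : V, (G.neighborSet v).Nonempty →
      ∃ i : Fin k, Odd {u | u ∈ G.neighborSet v ∧ c u = i}.ncard) :
    ∃ c : V → Fin (s * k), (∀ u v : V, G.Adj u v → c u ≠ c v) ∧
      ∀ v : V, (G.neighborSet v).Nonempty →
        ∃ i : Fin (s * k), Odd {u | u ∈ G.neighborSet v ∧ c u = i}.ncard := by
  classical
  obtain ⟨c1, hc1⟩ := hproper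
  obtain ⟨c2, hc2⟩ := hio
  refine ⟨fun v => finProdFinEquiv (c1 v, c2 v), ?_, ?_⟩
  · intro u v huv h
    exact hc1 u v huv (congrArg Prod.fst (finProdFinEquiv.injective h))
  · intro v hv
    obtain ⟨i, hi⟩ := hc2 v hv
    set A : Finset V := (G.neighborFinset v).filter (fun u => c2 u = i) with hA
    have hAset : {u | u ∈ G.neighborSet v ∧ c2 u = i} = (A : Set V) := by
      ext u
      simp [hA, SimpleGraph.mem_neighborFinset]
    rw [hAset, Set.ncard_coe_finset] at hi
    have hsum : A.card = ∑ j : Fin s, (A.filter fun u => c1 u = j).card :=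
      Finset.card_eq_sum_card_fiberwise (fun x _ => Finset.mem_univ (c1 x))
    have hj : ∃ j : Fin s, Odd (A.filter fun u => c1 u = j).card := by
      by_contra hcon
      push_neg at hcon
      simp only [Nat.not_odd_iff_even] at hcon
      have : Even A.card := by
        rw [hsum]
        exact Finset.even_sum _ (fun j _ => hcon j)
      exact (Nat.not_even_iff_odd.mpr hi) this
    obtain ⟨j, hj⟩ := hj
    refine ⟨finProdFinEquiv (j, i), ?_⟩
    have hset : {u | u ∈ G.neighborSet v ∧ finProdFinEquiv (c1 u, c2 u) = finProdFinEquiv (j, i)}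
        = ((A.filter fun u => c1 u = j) : Set V) := by
      ext u
      simp only [Set.mem_setOf_eq, Finset.coe_filter, hA, Finset.mem_filter,
        SimpleGraph.mem_neighborFinset, SimpleGraph.mem_neighborSet,
        EmbeddingLike.apply_eq_iff_eq, Prod.mk.injEq]
      tauto
    rw [hset, Set.ncard_coe_finset]
    exact hj
end

section
/- For all positive integers r and ℓ there exists a positive integer δ = δ(r,ℓ) such that the following holds: if G is a finite simple graph with a bipartition (X,Y) such that no two distinct vertices of X have the same open neighborhood, and for every nonempty subset A ⊆ V(G) the number of distinct sets of the form N(v) ∩ A with v ∈ V(G) is at most r·|A|, then for every subset Y' ⊆ Y with |Y'| ≥ max{2, |Y|/ℓ} there exist distinct vertices u, v ∈ Y' with |N(u) Δ N(v)| ≤ δ, where Δ denotes symmetric difference. -/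
/-- `G` has neighborhood complexity at most `r * m`. -/
def NbhdComplexityLinear {V : Type} [Fintype V] [DecidableEq V]
    (G : SimpleGraph V) [DecidableRel G.Adj] (r : ℕ) : Prop :=
  ∀ A : Finset V, A.Nonempty →
    (Finset.univ.image (fun v => G.neighborFinset v ∩ A)).card ≤ r * A.card

/-!
If no two vertices of `Y'` are `δ`-near-twins, their neighbourhoods form a family `P` of subsets
of `X` with pairwise symmetric differences larger than `δ`. Linear neighbourhood complexity says
that `P` has at most `r * #A` traces on every nonempty `A ⊆ X`; in particular its VC-dimension
is at most `2 r + 1`. Haussler's packing argument then yields an `s`-subset `B` of `X`, with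
`s ≈ 4 (2 r + 1) #X / δ`, on which `P` has at least `#P / 2` traces, so `#P ≤ 2 r s`. Since `X`
has no twins, `#X ≤ r #Y ≤ r ℓ #P`; for `δ = 16 (2 r + 1) r² ℓ` the two bounds force
`#P < 4 r`, hence `#X ≤ δ`, and then every pair in `Y'` is a pair of `δ`-near-twins.
-/

namespace Nat

lemma mul_le_add_mul_min (a b : ℕ) : a * b ≤ (a + b) * min a b := by
  rcases le_total a b with h | h
  · rw [min_eq_left h]; nlinarith
  · rw [min_eq_right h]; nlinarith

lemma le_two_mul_add_one_of_two_pow_le_mul {a r : ℕ} (h : 2 ^ a ≤ r * a) : a ≤ 2 * r + 1 := by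
  -- otherwise `r * a < a.choose 2 ≤ 2 ^ a`
  by_contra! ha
  obtain ⟨n, rfl⟩ : ∃ n, a = n + 1 := ⟨a - 1, by omega⟩
  have hchoose : (n + 1).choose 2 * 2 = (n + 1) * n := by
    simpa using (Nat.add_one_mul_choose_eq n 1).symm
  have := Nat.choose_le_two_pow (n + 1) 2
  nlinarith

end Nat

open Finset
open scoped symmDiff

namespace Finset

variable {α : Type*} [DecidableEq α]

lemma symmDiff_singleton_of_notMem {s : Finset α} {a : α} (h : a ∉ s) :
    s ∆ {a} = insert a s := by
  ext x
  by_cases hx : x = a <;> simp_all [mem_symmDiff]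

lemma symmDiff_singleton_of_mem {s : Finset α} {a : α} (h : a ∈ s) : s ∆ {a} = s.erase a := by
  ext x
  by_cases hx : x = a <;> simp_all [mem_symmDiff]

lemma insert_symmDiff_singleton {s : Finset α} {a b : α} (h : a ≠ b) :
    insert a s ∆ {b} = insert a (s ∆ {b}) := by
  ext x
  by_cases hx : x = a <;> simp_all [mem_symmDiff]

lemma erase_eq_inter_of_subset_insert {s t : Finset α} {a : α} (ha : a ∉ s)
    (h : t ⊆ insert a s) : t.erase a = t ∩ s := by
  ext x
  have := @h x
  simp only [mem_erase, mem_inter, mem_insert] at this ⊢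
  grind

lemma inter_insert_eq_iff {D B z : Finset α} {b : α} (hz : b ∉ z) :
    D ∩ insert b B = z ↔ D ∩ B = z ∧ b ∉ D := by
  by_cases hb : b ∈ D
  · simp only [inter_insert_of_mem hb, hb, not_true_eq_false, and_false, iff_false]
    exact fun h ↦ hz (h ▸ mem_insert_self b _)
  · simp [inter_insert_of_notMem hb, hb]

lemma inter_insert_eq_insert_iff {D B z : Finset α} {b : α} (hB : b ∉ B) (hz : b ∉ z) :
    D ∩ insert b B = insert b z ↔ D ∩ B = z ∧ b ∈ D := by
  by_cases hb : b ∈ D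
  · simp only [inter_insert_of_mem hb, hb, and_true]
    have hDB : b ∉ D ∩ B := fun h ↦ hB (mem_inter.1 h).2
    refine ⟨fun h ↦ ?_, fun h ↦ h ▸ rfl⟩
    rw [← erase_insert hz, ← erase_insert hDB, h]
  · simp only [inter_insert_of_notMem hb, hb, and_false, iff_false]
    exact fun h ↦ hb (mem_inter.1 (h ▸ mem_insert_self b z)).1

lemma card_filter_range_lt {n m : ℕ} (h : m ≤ n) : #{k ∈ range n | k < m} = m := by
  have : {k ∈ range n | k < m} = range m := by
    ext k
    simp only [mem_filter, mem_range]
    omega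
  rw [this, card_range]

lemma card_filter_mem_add_card_filter_mem_le {β : Type*} [DecidableEq β] (f : β → β)
    (𝒜 ℬ : Finset β) :
    #{x ∈ 𝒜 | f x ∈ 𝒜} + #{x ∈ ℬ | f x ∈ ℬ} ≤
      #{x ∈ 𝒜 ∪ ℬ | f x ∈ 𝒜 ∪ ℬ} + #{x ∈ 𝒜 ∩ ℬ | f x ∈ 𝒜 ∩ ℬ} := by
  rw [← card_union_add_card_inter]
  gcongr
  · intro x; simp only [mem_union, mem_filter]; tauto
  · intro x; simp only [mem_inter, mem_filter]; tauto

lemma sum_powersetCard_sum_sdiff {M : Type*} [AddCommMonoid M] (X : Finset α) (s : ℕ)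
    (f : Finset α → α → M) :
    ∑ B ∈ X.powersetCard s, ∑ b ∈ X \ B, f (insert b B) b =
      ∑ C ∈ X.powersetCard (s + 1), ∑ b ∈ C, f C b := by
  rw [sum_sigma', sum_sigma']
  refine sum_nbij' (fun p ↦ ⟨insert p.2 p.1, p.2⟩) (fun p ↦ ⟨p.1.erase p.2, p.2⟩) ?_ ?_ ?_ ?_
    fun _ _ ↦ rfl
  · rintro ⟨B, b⟩ hp
    simp only [mem_sigma, mem_powersetCard, mem_sdiff] at hp ⊢
    exact ⟨⟨insert_subset hp.2.1 hp.1.1, by rw [card_insert_of_notMem hp.2.2, hp.1.2]⟩,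
      mem_insert_self b B⟩
  · rintro ⟨C, b⟩ hp
    simp only [mem_sigma, mem_powersetCard, mem_sdiff] at hp ⊢
    exact ⟨⟨(erase_subset b C).trans hp.1.1, by rw [card_erase_of_mem hp.2, hp.1.2]; rfl⟩,
      hp.1.1 hp.2, notMem_erase b C⟩
  · rintro ⟨B, b⟩ hp
    simp only [mem_sigma, mem_sdiff] at hp
    simp [erase_insert hp.2.2]
  · rintro ⟨C, b⟩ hp
    simp only [mem_sigma] at hp
    simp [insert_erase hp.2]

/-! ### VC-dimension and the one-inclusion graph -/

lemma Shatters.of_image_inter {𝒜 : Finset (Finset α)} {s C : Finset α}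
    (h : (𝒜.image (· ∩ C)).Shatters s) : 𝒜.Shatters s := by
  obtain ⟨_, hu, hsu⟩ := h.exists_superset
  obtain ⟨u, -, rfl⟩ := mem_image.1 hu
  have hsC : s ⊆ C := hsu.trans inter_subset_right
  intro t ht
  obtain ⟨_, hv, rfl⟩ := h ht
  obtain ⟨v, hv', rfl⟩ := mem_image.1 hv
  exact ⟨v, hv', by rw [← inter_assoc, inter_right_comm, inter_eq_left.2 hsC]⟩

lemma vcDim_image_inter_le (𝒜 : Finset (Finset α)) (C : Finset α) :
    (𝒜.image (· ∩ C)).vcDim ≤ 𝒜.vcDim :=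
  Finset.sup_le fun _ hs ↦ (mem_shatterer.1 hs).of_image_inter.card_le_vcDim

lemma Shatters.insert_of_memberSubfamily_inter_nonMemberSubfamily {𝒜 : Finset (Finset α)}
    {s : Finset α} {a : α} (h : (𝒜.memberSubfamily a ∩ 𝒜.nonMemberSubfamily a).Shatters s) :
    𝒜.Shatters (insert a s) := by
  intro t ht
  by_cases ha : a ∈ t
  · obtain ⟨u, hu, hsu⟩ := h (subset_insert_iff.1 ht)
    refine ⟨insert a u, (mem_memberSubfamily.1 (mem_inter.1 hu).1).1, ?_⟩
    rw [← insert_inter_distrib, hsu, insert_erase ha]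
  · obtain ⟨u, hu, hsu⟩ := h ((subset_insert_iff_of_notMem ha).1 ht)
    obtain ⟨hu𝒜, hau⟩ := mem_nonMemberSubfamily.1 (mem_inter.1 hu).2
    exact ⟨u, hu𝒜, by rw [insert_inter_of_notMem hau, hsu]⟩

lemma vcDim_memberSubfamily_inter_nonMemberSubfamily_lt {𝒜 : Finset (Finset α)} {a : α}
    (h : (𝒜.memberSubfamily a ∩ 𝒜.nonMemberSubfamily a).Nonempty) :
    (𝒜.memberSubfamily a ∩ 𝒜.nonMemberSubfamily a).vcDim < 𝒜.vcDim := by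
  set ℐ := 𝒜.memberSubfamily a ∩ 𝒜.nonMemberSubfamily a
  obtain ⟨s, hs, hsup⟩ := exists_mem_eq_sup ℐ.shatterer ⟨∅, by simpa using h⟩ card
  replace hs := mem_shatterer.1 hs
  obtain ⟨u, hu, hsu⟩ := hs.exists_superset
  have has : a ∉ s := fun ha ↦ (mem_nonMemberSubfamily.1 (mem_inter.1 hu).2).2 (hsu ha)
  calc ℐ.vcDim = #s := hsup
    _ < #(insert a s) := by rw [card_insert_of_notMem has]; omega
    _ ≤ 𝒜.vcDim := hs.insert_of_memberSubfamily_inter_nonMemberSubfamily.card_le_vcDim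

lemma card_filter_symmDiff_singleton_mem (𝒜 : Finset (Finset α)) (a : α) :
    #{t ∈ 𝒜 | t ∆ {a} ∈ 𝒜} = 2 * #(𝒜.memberSubfamily a ∩ 𝒜.nonMemberSubfamily a) := by
  set ℐ := 𝒜.memberSubfamily a ∩ 𝒜.nonMemberSubfamily a
  have hℐ : ∀ t ∈ ℐ, a ∉ t := fun t ht ↦ (mem_nonMemberSubfamily.1 (mem_inter.1 ht).2).2
  have hout : {t ∈ {t ∈ 𝒜 | t ∆ {a} ∈ 𝒜} | a ∉ t} = ℐ := by
    ext t
    by_cases ha : a ∈ t <;> simp [ℐ, ha, symmDiff_singleton_of_notMem, and_comm]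
  have hin : {t ∈ {t ∈ 𝒜 | t ∆ {a} ∈ 𝒜} | a ∈ t} = ℐ.image (insert a) := by
    ext t
    by_cases ha : a ∈ t
    · simp only [mem_filter, symmDiff_singleton_of_mem ha, ha, mem_image]
      constructor
      · rintro ⟨⟨ht, he⟩, -⟩
        exact ⟨t.erase a, by simp [ℐ, insert_erase ha, ht, he], insert_erase ha⟩
      · rintro ⟨u, hu, rfl⟩
        have hau := hℐ u hu
        simp only [ℐ, mem_inter, mem_memberSubfamily, mem_nonMemberSubfamily] at hu
        simp [hu, erase_insert hau]
    · simp only [mem_filter, ha, and_false, false_iff, mem_image, not_exists, not_and]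
      rintro u - rfl
      exact ha (mem_insert_self a u)
  rw [← card_filter_add_card_filter_not (fun t ↦ a ∈ t), hin, hout,
    card_image_of_injOn (insert_erase_invOn.2.injOn.mono hℐ), two_mul]

lemma card_filter_symmDiff_singleton_mem_of_ne (𝒜 : Finset (Finset α)) {a b : α} (hab : a ≠ b) :
    #{t ∈ 𝒜 | t ∆ {b} ∈ 𝒜} =
      #{t ∈ 𝒜.nonMemberSubfamily a | t ∆ {b} ∈ 𝒜.nonMemberSubfamily a} +
        #{t ∈ 𝒜.memberSubfamily a | t ∆ {b} ∈ 𝒜.memberSubfamily a} := by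
  have hmem : ∀ t : Finset α, a ∈ t ∆ {b} ↔ a ∈ t := by simp [mem_symmDiff, hab]
  have hout : {t ∈ {t ∈ 𝒜 | t ∆ {b} ∈ 𝒜} | a ∉ t} =
      {t ∈ 𝒜.nonMemberSubfamily a | t ∆ {b} ∈ 𝒜.nonMemberSubfamily a} := by
    ext t
    simp only [mem_filter, mem_nonMemberSubfamily, hmem]
    tauto
  have hin : {t ∈ {t ∈ 𝒜 | t ∆ {b} ∈ 𝒜} | a ∈ t} =
      {t ∈ 𝒜.memberSubfamily a | t ∆ {b} ∈ 𝒜.memberSubfamily a}.image (insert a) := by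
    ext t
    simp only [mem_filter, mem_image, mem_memberSubfamily, hmem, ← insert_symmDiff_singleton hab]
    constructor
    · rintro ⟨⟨ht, he⟩, ha⟩
      exact ⟨t.erase a, by simp [insert_erase ha, ht, he], insert_erase ha⟩
    · rintro ⟨u, ⟨⟨hu, -⟩, he, -⟩, rfl⟩
      exact ⟨⟨hu, he⟩, mem_insert_self a u⟩
  rw [← card_filter_add_card_filter_not (fun t ↦ a ∈ t), hin, hout, add_comm,
    card_image_of_injOn (insert_erase_invOn.2.injOn.mono fun t ht ↦
      (mem_memberSubfamily.1 (mem_filter.1 ht).1).2)]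

/-- The left side counts twice the edges of the one-inclusion graph of `𝒜` (pairs of members at
distance one). Splitting `𝒜` at `a` into `𝒜₀` (members avoiding `a`) and `𝒜₁` (members containing
`a`, with `a` removed), the edges in direction `a` are matched with `𝒜₀ ∩ 𝒜₁`, and the others are
dominated by those of `𝒜₀ ∪ 𝒜₁` and `𝒜₀ ∩ 𝒜₁`; the VC-dimension of the latter is smaller. -/
theorem sum_card_filter_symmDiff_singleton_mem_le {𝒜 : Finset (Finset α)} {s : Finset α}
    (h𝒜 : ∀ t ∈ 𝒜, t ⊆ s) :
    ∑ b ∈ s, #{t ∈ 𝒜 | t ∆ {b} ∈ 𝒜} ≤ 2 * 𝒜.vcDim * #𝒜 := by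
  induction s using Finset.induction_on generalizing 𝒜 with
  | empty => simp
  | insert a s ha ih =>
    set 𝒰 := 𝒜.memberSubfamily a ∪ 𝒜.nonMemberSubfamily a
    set ℐ := 𝒜.memberSubfamily a ∩ 𝒜.nonMemberSubfamily a
    have h𝒰 : 𝒰 = 𝒜.image (· ∩ s) :=
      (memberSubfamily_union_nonMemberSubfamily a 𝒜).trans <|
        image_congr fun t ht ↦ erase_eq_inter_of_subset_insert ha (h𝒜 t ht)
    have h𝒰s : ∀ t ∈ 𝒰, t ⊆ s := by
      rw [h𝒰]
      exact forall_mem_image.2 fun _ _ ↦ inter_subset_right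
    have hvc𝒰 : 𝒰.vcDim ≤ 𝒜.vcDim := h𝒰 ▸ vcDim_image_inter_le 𝒜 s
    have hvcℐ : #ℐ + ℐ.vcDim * #ℐ ≤ 𝒜.vcDim * #ℐ := by
      rcases ℐ.eq_empty_or_nonempty with hℐ | hℐ
      · simp [hℐ]
      · have := vcDim_memberSubfamily_inter_nonMemberSubfamily_lt hℐ
        nlinarith
    have hcard : #𝒰 + #ℐ = #𝒜 := by
      rw [card_union_add_card_inter, card_memberSubfamily_add_card_nonMemberSubfamily]
    have hsplit : ∀ b ∈ s, #{t ∈ 𝒜 | t ∆ {b} ∈ 𝒜} ≤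
        #{t ∈ 𝒰 | t ∆ {b} ∈ 𝒰} + #{t ∈ ℐ | t ∆ {b} ∈ ℐ} := fun b hb ↦ by
      rw [card_filter_symmDiff_singleton_mem_of_ne 𝒜 (ne_of_mem_of_not_mem hb ha).symm, add_comm]
      exact card_filter_mem_add_card_filter_mem_le _ _ _
    calc ∑ b ∈ insert a s, #{t ∈ 𝒜 | t ∆ {b} ∈ 𝒜}
        = 2 * #ℐ + ∑ b ∈ s, #{t ∈ 𝒜 | t ∆ {b} ∈ 𝒜} := by
          rw [sum_insert ha, card_filter_symmDiff_singleton_mem]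
      _ ≤ 2 * #ℐ + (∑ b ∈ s, #{t ∈ 𝒰 | t ∆ {b} ∈ 𝒰} + ∑ b ∈ s, #{t ∈ ℐ | t ∆ {b} ∈ ℐ}) := by
          rw [← sum_add_distrib]
          gcongr with b hb
          exact hsplit b hb
      _ ≤ 2 * #ℐ + (2 * 𝒰.vcDim * #𝒰 + 2 * ℐ.vcDim * #ℐ) := by
          gcongr
          · exact ih h𝒰s
          · exact ih fun t ht ↦ h𝒰s t (inter_subset_union ht)
      _ ≤ 2 * 𝒜.vcDim * #𝒜 := by
          rw [← hcard]
          nlinarith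

/-! ### Haussler's packing lemma -/

def traceMult (P : Finset (Finset α)) (C t : Finset α) : ℕ := #{D ∈ P | D ∩ C = t}

lemma traceMult_le_card (P : Finset (Finset α)) (C t : Finset α) : traceMult P C t ≤ #P :=
  card_filter_le _ _

lemma mem_image_inter_of_traceMult_pos {P : Finset (Finset α)} {C t : Finset α}
    (h : 0 < traceMult P C t) : t ∈ P.image (· ∩ C) := by
  obtain ⟨D, hD⟩ := card_pos.1 h
  exact mem_image.2 ⟨D, (mem_filter.1 hD).1, (mem_filter.1 hD).2⟩

lemma sum_traceMult_powerset (P : Finset (Finset α)) (C : Finset α) :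
    ∑ t ∈ C.powerset, traceMult P C t = #P :=
  (card_eq_sum_card_fiberwise fun _ _ ↦ mem_powerset.2 inter_subset_right).symm

/-- The left side is the total weight of the one-inclusion graph of the trace of `P` on `C`, an
edge weighing the smaller multiplicity of its ends. Since `min (w t) (w t')` counts the levels `k`
at which both `t` and `t'` lie in `{t | k < w t}`, this reduces to the unweighted bound. -/
theorem sum_sum_min_traceMult_le (P : Finset (Finset α)) (C : Finset α) :
    ∑ b ∈ C, ∑ t ∈ C.powerset, min (traceMult P C t) (traceMult P C (t ∆ {b})) ≤
      2 * P.vcDim * #P := by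
  set w := traceMult P C
  have hw : ∀ t, w t ≤ #P := traceMult_le_card P C
  set level : ℕ → Finset (Finset α) := fun k ↦ {t ∈ C.powerset | k < w t}
  have hlevel : ∀ k t, t ∈ level k ↔ k < w t := fun k t ↦ by
    simp only [level, mem_filter, mem_powerset, and_iff_right_iff_imp]
    intro hk
    obtain ⟨D, -, rfl⟩ := mem_image.1 (mem_image_inter_of_traceMult_pos (pos_of_gt hk))
    exact inter_subset_right
  have hmin : ∀ t t', min (w t) (w t') = #{k ∈ range #P | t ∈ level k ∧ t' ∈ level k} := by
    intro t t'
    simp only [hlevel, ← lt_min_iff]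
    exact (card_filter_range_lt ((min_le_left _ _).trans (hw t))).symm
  have hedge : ∀ k b, #{t ∈ level k | t ∆ {b} ∈ level k} =
      ∑ t ∈ C.powerset, if k < w t ∧ k < w (t ∆ {b}) then 1 else 0 := by
    intro k b
    rw [card_filter, sum_filter]
    simp only [hlevel, ite_and]
  have hlayers : ∑ k ∈ range #P, #(level k) = #P := by
    simp only [level, card_filter]
    rw [sum_comm]
    simp only [← card_filter, card_filter_range_lt (hw _)]
    exact sum_traceMult_powerset P C
  calc ∑ b ∈ C, ∑ t ∈ C.powerset, min (w t) (w (t ∆ {b}))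
      = ∑ k ∈ range #P, ∑ b ∈ C, #{t ∈ level k | t ∆ {b} ∈ level k} := by
        simp only [hedge]
        simp only [hmin, card_filter, hlevel]
        rw [sum_congr rfl fun b _ ↦ sum_comm, sum_comm]
    _ ≤ ∑ k ∈ range #P, 2 * P.vcDim * #(level k) := by
        gcongr with k
        refine (sum_card_filter_symmDiff_singleton_mem_le fun t ht ↦ ?_).trans ?_
        · exact mem_powerset.1 (mem_filter.1 ht).1
        · refine Nat.mul_le_mul_right _ (Nat.mul_le_mul_left 2 ?_)
          refine (vcDim_mono fun t ht ↦ ?_).trans (vcDim_image_inter_le P C)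
          exact mem_image_inter_of_traceMult_pos (pos_of_gt ((hlevel k t).1 ht))
    _ = 2 * P.vcDim * #P := by
        rw [← mul_sum, hlayers]

lemma sum_sum_card_symmDiff_eq {𝒞 : Finset (Finset α)} {Y : Finset α}
    (hY : ∀ D ∈ 𝒞, ∀ D' ∈ 𝒞, D ∆ D' ⊆ Y) :
    ∑ D ∈ 𝒞, ∑ D' ∈ 𝒞, #(D ∆ D') = ∑ b ∈ Y, 2 * (#{D ∈ 𝒞 | b ∉ D} * #{D ∈ 𝒞 | b ∈ D}) := by
  have hcard : ∀ D ∈ 𝒞, ∀ D' ∈ 𝒞, #(D ∆ D') = ∑ b ∈ Y,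
      ((if b ∉ D then 1 else 0) * (if b ∈ D' then 1 else 0) +
        (if b ∈ D then 1 else 0) * (if b ∉ D' then 1 else 0)) := by
    intro D hD D' hD'
    rw [← inter_eq_right.2 (hY D hD D' hD'), ← filter_mem_eq_inter, card_filter]
    refine sum_congr rfl fun b _ ↦ ?_
    by_cases hb : b ∈ D <;> by_cases hb' : b ∈ D' <;> simp [mem_symmDiff, hb, hb']
  rw [sum_congr rfl fun D hD ↦ sum_congr rfl (hcard D hD), sum_congr rfl fun D _ ↦ sum_comm,
    sum_comm]
  refine sum_congr rfl fun b _ ↦ ?_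
  simp only [sum_add_distrib, ← sum_mul_sum, ← card_filter]
  ring

lemma mul_card_mul_card_sub_one_le {𝒞 : Finset (Finset α)} {δ : ℕ}
    (hsep : ∀ D ∈ 𝒞, ∀ D' ∈ 𝒞, D ≠ D' → δ ≤ #(D ∆ D')) :
    δ * (#𝒞 * (#𝒞 - 1)) ≤ ∑ D ∈ 𝒞, ∑ D' ∈ 𝒞, #(D ∆ D') :=
  calc δ * (#𝒞 * (#𝒞 - 1)) = ∑ D ∈ 𝒞, ∑ _D' ∈ 𝒞.erase D, δ := by
        rw [sum_congr rfl fun D hD ↦ by rw [sum_const, card_erase_of_mem hD, smul_eq_mul],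
          sum_const, smul_eq_mul]
        ring
    _ ≤ ∑ D ∈ 𝒞, ∑ D' ∈ 𝒞.erase D, #(D ∆ D') := by
        gcongr with D hD D' hD'
        exact hsep D hD D' (mem_of_mem_erase hD') (ne_of_mem_erase hD').symm
    _ ≤ ∑ D ∈ 𝒞, ∑ D' ∈ 𝒞, #(D ∆ D') := by
        gcongr with D
        exact erase_subset D 𝒞

/-- Double count the ordered pairs of `𝒞` separated by each coordinate `b`: there are
`2 c₀ c₁ ≤ 2 #𝒞 min c₀ c₁` of them, where `c₀ + c₁ = #𝒞`. -/
theorem mul_card_le_add_two_mul_sum_min {𝒞 : Finset (Finset α)} {Y : Finset α} {δ : ℕ}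
    (hY : ∀ D ∈ 𝒞, ∀ D' ∈ 𝒞, D ∆ D' ⊆ Y) (hsep : ∀ D ∈ 𝒞, ∀ D' ∈ 𝒞, D ≠ D' → δ ≤ #(D ∆ D')) :
    δ * #𝒞 ≤ δ + 2 * ∑ b ∈ Y, min #{D ∈ 𝒞 | b ∉ D} #{D ∈ 𝒞 | b ∈ D} := by
  rcases 𝒞.eq_empty_or_nonempty with rfl | h𝒞
  · simp
  have hsplit : ∀ b ∈ Y, 2 * (#{D ∈ 𝒞 | b ∉ D} * #{D ∈ 𝒞 | b ∈ D}) ≤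
      #𝒞 * (2 * min #{D ∈ 𝒞 | b ∉ D} #{D ∈ 𝒞 | b ∈ D}) := fun b _ ↦ by
    have hc := card_filter_add_card_filter_not (s := 𝒞) (fun D ↦ b ∉ D)
    simp only [not_not] at hc
    rw [← hc]
    linarith [Nat.mul_le_add_mul_min #{D ∈ 𝒞 | b ∉ D} #{D ∈ 𝒞 | b ∈ D}]
  have key : #𝒞 * (δ * (#𝒞 - 1)) ≤
      #𝒞 * (2 * ∑ b ∈ Y, min #{D ∈ 𝒞 | b ∉ D} #{D ∈ 𝒞 | b ∈ D}) :=
    calc #𝒞 * (δ * (#𝒞 - 1)) = δ * (#𝒞 * (#𝒞 - 1)) := by ring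
      _ ≤ ∑ b ∈ Y, 2 * (#{D ∈ 𝒞 | b ∉ D} * #{D ∈ 𝒞 | b ∈ D}) :=
        (mul_card_mul_card_sub_one_le hsep).trans (sum_sum_card_symmDiff_eq hY).le
      _ ≤ ∑ b ∈ Y, #𝒞 * (2 * min #{D ∈ 𝒞 | b ∉ D} #{D ∈ 𝒞 | b ∈ D}) := sum_le_sum hsplit
      _ = _ := by rw [← mul_sum, ← mul_sum]
  have := Nat.le_of_mul_le_mul_left key (card_pos.2 h𝒞)
  have hc : δ * #𝒞 = δ * (#𝒞 - 1) + δ := by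
    rw [← Nat.mul_add_one, Nat.sub_add_cancel (card_pos.2 h𝒞)]
  omega

lemma sum_powerset_insert_min_symmDiff (w : Finset α → ℕ) {B : Finset α} {b : α} (hb : b ∉ B) :
    ∑ t ∈ (insert b B).powerset, min (w t) (w (t ∆ {b})) =
      2 * ∑ z ∈ B.powerset, min (w z) (w (insert b z)) := by
  rw [sum_powerset_insert hb, two_mul]
  congr 1 <;> refine sum_congr rfl fun z hz ↦ ?_
  · have hbz : b ∉ z := fun h ↦ hb (mem_powerset.1 hz h)
    rw [symmDiff_singleton_of_notMem hbz]
  · have hbz : b ∉ z := fun h ↦ hb (mem_powerset.1 hz h)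
    rw [symmDiff_singleton_of_mem (mem_insert_self b z), erase_insert hbz, min_comm]

/-- Apply `mul_card_le_add_two_mul_sum_min` to each class of members of `P` with a common trace
`z` on `B`: they differ only outside `B`, and the two halves of the class split by `b` are the
classes of `z` and `insert b z` on `insert b B`. -/
theorem mul_card_le_mul_card_image_inter_add {P : Finset (Finset α)} {X : Finset α} (B : Finset α)
    {δ : ℕ} (hPX : ∀ D ∈ P, D ⊆ X) (hsep : ∀ D ∈ P, ∀ D' ∈ P, D ≠ D' → δ ≤ #(D ∆ D')) :
    δ * #P ≤ δ * #(P.image (· ∩ B)) + ∑ b ∈ X \ B, ∑ t ∈ (insert b B).powerset,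
      min (traceMult P (insert b B) t) (traceMult P (insert b B) (t ∆ {b})) := by
  have hclass : ∀ z ∈ P.image (· ∩ B), δ * #{D ∈ P | D ∩ B = z} ≤ δ + 2 * ∑ b ∈ X \ B,
      min (traceMult P (insert b B) z) (traceMult P (insert b B) (insert b z)) := by
    intro z hz
    obtain ⟨D₀, -, rfl⟩ := mem_image.1 hz
    refine (mul_card_le_add_two_mul_sum_min (Y := X \ B) ?_ ?_).trans_eq ?_
    · intro D hD D' hD' x hx
      rw [mem_filter] at hD hD'
      rw [mem_sdiff]
      refine ⟨?_, fun hxB ↦ ?_⟩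
      · rcases mem_symmDiff.1 hx with ⟨h, -⟩ | ⟨h, -⟩
        exacts [hPX D hD.1 h, hPX D' hD'.1 h]
      · have := Finset.ext_iff.1 (hD.2.trans hD'.2.symm) x
        simp only [mem_inter, hxB, and_true] at this
        rw [mem_symmDiff, this] at hx
        tauto
    · exact fun D hD D' hD' ↦ hsep D (mem_filter.1 hD).1 D' (mem_filter.1 hD').1
    · congr 2
      refine sum_congr rfl fun b hb ↦ ?_
      have hbB := (mem_sdiff.1 hb).2
      have hbz : b ∉ D₀ ∩ B := fun h ↦ hbB (mem_inter.1 h).2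
      simp only [traceMult, filter_filter, inter_insert_eq_iff hbz,
        inter_insert_eq_insert_iff hbB hbz]
  calc δ * #P = ∑ z ∈ P.image (· ∩ B), δ * #{D ∈ P | D ∩ B = z} := by
        rw [card_eq_sum_card_image (· ∩ B) P, mul_sum]
    _ ≤ ∑ z ∈ P.image (· ∩ B), (δ + 2 * ∑ b ∈ X \ B,
          min (traceMult P (insert b B) z) (traceMult P (insert b B) (insert b z))) :=
        sum_le_sum hclass
    _ ≤ δ * #(P.image (· ∩ B)) + ∑ b ∈ X \ B, 2 * ∑ z ∈ B.powerset,
          min (traceMult P (insert b B) z) (traceMult P (insert b B) (insert b z)) := by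
        rw [sum_add_distrib, sum_const, smul_eq_mul, mul_comm, ← mul_sum, sum_comm, mul_sum]
        gcongr with b
        intro z hz
        obtain ⟨D, -, rfl⟩ := mem_image.1 hz
        exact mem_powerset.2 inter_subset_right
    _ = _ := by
        congr 1
        exact sum_congr rfl fun b hb ↦
          (sum_powerset_insert_min_symmDiff _ (mem_sdiff.1 hb).2).symm

/-- Summing `mul_card_le_mul_card_image_inter_add` over all `s`-subsets `B` of `X` covers each
pair `(insert b B, b)` once, so the weighted one-inclusion bound on `(s + 1)`-subsets gives an
`s`-subset with `#P ≤ 2 * #(trace of P on B)` as soon as `δ (s + 1) > 4 P.vcDim #X`. -/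
theorem exists_card_le_two_mul_card_image_inter {P : Finset (Finset α)} {X : Finset α}
    {δ s : ℕ} (hPX : ∀ D ∈ P, D ⊆ X) (hsep : ∀ D ∈ P, ∀ D' ∈ P, D ≠ D' → δ ≤ #(D ∆ D'))
    (hs : s ≤ #X) (hδ : 4 * P.vcDim * #X < δ * (s + 1)) :
    ∃ B ∈ X.powersetCard s, #P ≤ 2 * #(P.image (· ∩ B)) := by
  set n := #X
  set m := #P
  set d := P.vcDim
  set T : Finset α → ℕ := fun B ↦ #(P.image (· ∩ B))
  have htotal : n.choose s * (δ * m) ≤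
      δ * ∑ B ∈ X.powersetCard s, T B + n.choose (s + 1) * (2 * d * m) :=
    calc n.choose s * (δ * m) = ∑ B ∈ X.powersetCard s, δ * m := by
          rw [sum_const, card_powersetCard, smul_eq_mul]
      _ ≤ ∑ B ∈ X.powersetCard s, (δ * T B + ∑ b ∈ X \ B, ∑ t ∈ (insert b B).powerset,
            min (traceMult P (insert b B) t) (traceMult P (insert b B) (t ∆ {b}))) :=
          sum_le_sum fun B _ ↦ mul_card_le_mul_card_image_inter_add B hPX hsep
      _ = δ * ∑ B ∈ X.powersetCard s, T B + ∑ C ∈ X.powersetCard (s + 1), ∑ b ∈ C,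
            ∑ t ∈ C.powerset, min (traceMult P C t) (traceMult P C (t ∆ {b})) := by
          rw [sum_add_distrib, mul_sum, sum_powersetCard_sum_sdiff X s
            fun C b ↦ ∑ t ∈ C.powerset, min (traceMult P C t) (traceMult P C (t ∆ {b}))]
      _ ≤ δ * ∑ B ∈ X.powersetCard s, T B + ∑ C ∈ X.powersetCard (s + 1), 2 * d * m := by
          gcongr with C
          exact sum_sum_min_traceMult_le P C
      _ = _ := by rw [sum_const, card_powersetCard, smul_eq_mul]
  obtain ⟨B, hB, hBle⟩ : ∃ B ∈ X.powersetCard s,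
      n.choose s * (δ * m) ≤ n.choose s * (δ * T B) + n.choose (s + 1) * (2 * d * m) := by
    refine exists_le_of_sum_le (powersetCard_nonempty.2 hs) ?_
    rw [sum_const, sum_add_distrib, sum_const, ← mul_sum, ← mul_sum, card_powersetCard,
      smul_eq_mul, smul_eq_mul]
    nlinarith
  refine ⟨B, hB, ?_⟩
  have h1 : (s + 1) * (δ * m) ≤ (s + 1) * (δ * T B) + n * (2 * d * m) := by
    refine Nat.le_of_mul_le_mul_left ?_ (Nat.choose_pos hs)
    calc n.choose s * ((s + 1) * (δ * m)) = n.choose s * (δ * m) * (s + 1) := by ring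
      _ ≤ (n.choose s * (δ * T B) + n.choose (s + 1) * (2 * d * m)) * (s + 1) :=
        Nat.mul_le_mul_right _ hBle
      _ = n.choose s * ((s + 1) * (δ * T B) + (n - s) * (2 * d * m)) := by
        rw [add_mul, mul_right_comm (n.choose (s + 1)), Nat.choose_succ_right_eq]
        ring
      _ ≤ n.choose s * ((s + 1) * (δ * T B) + n * (2 * d * m)) := by
        gcongr
        exact Nat.sub_le n s
  have h2 : δ * (s + 1) * m ≤ δ * (s + 1) * (2 * T B) := by nlinarith
  exact Nat.le_of_mul_le_mul_left h2 (pos_of_gt hδ)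

/-! ### Families with linearly many traces -/

def HasLinearTraces (P : Finset (Finset α)) (X : Finset α) (r : ℕ) : Prop :=
  ∀ A ⊆ X, A.Nonempty → #(P.image (· ∩ A)) ≤ r * #A

namespace HasLinearTraces

variable {P : Finset (Finset α)} {X : Finset α} {r : ℕ}

lemma vcDim_le (htr : HasLinearTraces P X r) (hPX : ∀ D ∈ P, D ⊆ X) : P.vcDim ≤ 2 * r + 1 := by
  refine Finset.sup_le fun s hs ↦ ?_
  replace hs := mem_shatterer.1 hs
  rcases s.eq_empty_or_nonempty with rfl | hne
  · simp
  obtain ⟨D, hD, hsD⟩ := hs.exists_superset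
  refine Nat.le_two_mul_add_one_of_two_pow_le_mul ?_
  calc 2 ^ #s = #s.powerset := (card_powerset s).symm
    _ = #(P.image (· ∩ s)) := by simp_rw [← shatters_iff.1 hs, inter_comm]
    _ ≤ r * #s := htr s (hsD.trans (hPX D hD)) hne

theorem mul_card_le (htr : HasLinearTraces P X r) (hPX : ∀ D ∈ P, D ⊆ X) {δ : ℕ}
    (hsep : ∀ D ∈ P, ∀ D' ∈ P, D ≠ D' → δ ≤ #(D ∆ D')) (hX : X.Nonempty)
    (hδ : 4 * P.vcDim < δ) :
    δ * #P ≤ 8 * r * P.vcDim * #X + 2 * r * δ := by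
  set s := 4 * P.vcDim * #X / δ + 1
  have hδ₀ : 0 < δ := pos_of_gt hδ
  have hs : s ≤ #X := (Nat.div_lt_iff_lt_mul hδ₀).2 (by nlinarith [card_pos.2 hX])
  have hsδ : 4 * P.vcDim * #X < δ * (s + 1) :=
    (Nat.lt_mul_div_succ _ hδ₀).trans_le (Nat.mul_le_mul_left δ (Nat.le_succ s))
  obtain ⟨B, hB, hPB⟩ := exists_card_le_two_mul_card_image_inter hPX hsep hs hsδ
  rw [mem_powersetCard] at hB
  have hT : #(P.image (· ∩ B)) ≤ r * s := hB.2 ▸ htr B hB.1 (card_pos.1 (hB.2 ▸ Nat.succ_pos _))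
  calc δ * #P ≤ δ * (2 * (r * s)) := by gcongr; omega
    _ = 2 * r * (δ * (4 * P.vcDim * #X / δ) + δ) := by ring
    _ ≤ 2 * r * (4 * P.vcDim * #X + δ) :=
      Nat.mul_le_mul_left _ (Nat.add_le_add_right (Nat.mul_div_le _ _) _)
    _ = 8 * r * P.vcDim * #X + 2 * r * δ := by ring

theorem card_le_of_separated (htr : HasLinearTraces P X r) (hPX : ∀ D ∈ P, D ⊆ X) {ℓ : ℕ}
    (hsep : ∀ D ∈ P, ∀ D' ∈ P, D ≠ D' → 16 * (2 * r + 1) * r ^ 2 * ℓ < #(D ∆ D'))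
    (hX : #X ≤ r * ℓ * #P) :
    #X ≤ 16 * (2 * r + 1) * r ^ 2 * ℓ := by
  set δ := 16 * (2 * r + 1) * r ^ 2 * ℓ
  rcases X.eq_empty_or_nonempty with rfl | hne
  · simp
  have hrℓ : 0 < r * ℓ := Nat.pos_of_mul_pos_right ((card_pos.2 hne).trans_le hX)
  have hr : 0 < r := Nat.pos_of_mul_pos_right hrℓ
  have hr2ℓ : 1 ≤ r ^ 2 * ℓ := by rw [sq, mul_assoc]; exact Nat.mul_pos hr hrℓ
  have hvc := htr.vcDim_le hPX
  have hvcδ : 4 * P.vcDim < δ + 1 :=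
    calc 4 * P.vcDim ≤ 16 * (2 * r + 1) * 1 := by omega
      _ ≤ 16 * (2 * r + 1) * (r ^ 2 * ℓ) := by gcongr
      _ < δ + 1 := by rw [← mul_assoc]; exact Nat.lt_succ_self δ
  have hpack := htr.mul_card_le hPX hsep hne hvcδ
  have h1 : 2 * (8 * r * P.vcDim * #X) ≤ δ * #P :=
    calc 2 * (8 * r * P.vcDim * #X) ≤ 2 * (8 * r * (2 * r + 1) * (r * ℓ * #P)) := by gcongr
      _ = δ * #P := by ring
  have h2 : (δ + 2) * #P < (δ + 2) * (4 * r) := by nlinarith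
  calc #X ≤ r * ℓ * #P := hX
    _ ≤ r * ℓ * (4 * r) := by gcongr; exact (Nat.lt_of_mul_lt_mul_left h2).le
    _ = 4 * (r ^ 2 * ℓ) := by ring
    _ ≤ 16 * (2 * r + 1) * (r ^ 2 * ℓ) := by gcongr; omega
    _ = δ := by ring

end HasLinearTraces

end Finset

namespace SimpleGraph

variable {V : Type} [Fintype V] (G : SimpleGraph V) [DecidableRel G.Adj]

lemma neighborFinset_subset_of_bipartition {X Y : Finset V} (hXY : Disjoint X Y)
    (hbip : ∀ u v : V, G.Adj u v → (u ∈ X ∧ v ∈ Y) ∨ (u ∈ Y ∧ v ∈ X)) {y : V} (hy : y ∈ Y) :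
    G.neighborFinset y ⊆ X := by
  intro v hv
  rcases hbip y v ((G.mem_neighborFinset y v).1 hv) with ⟨hyX, -⟩ | ⟨-, hvX⟩
  · exact absurd hy (Finset.disjoint_left.1 hXY hyX)
  · exact hvX

lemma card_le_mul_card_of_neighborFinset_injOn [DecidableEq V] {X Y : Finset V} {r : ℕ}
    (hN : ∀ x ∈ X, G.neighborFinset x ⊆ Y)
    (htwin : ∀ u ∈ X, ∀ v ∈ X, u ≠ v → G.neighborFinset u ≠ G.neighborFinset v)
    (hG : NbhdComplexityLinear G r) (hY : Y.Nonempty) : #X ≤ r * #Y := by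
  have hinj : Set.InjOn (fun x ↦ G.neighborFinset x ∩ Y) X := fun u hu v hv huv ↦ by
    by_contra hne
    refine htwin u hu v hv hne ?_
    simpa only [inter_eq_left.2 (hN u hu), inter_eq_left.2 (hN v hv)] using huv
  calc #X = #(X.image fun x ↦ G.neighborFinset x ∩ Y) := (card_image_of_injOn hinj).symm
    _ ≤ #(univ.image fun v ↦ G.neighborFinset v ∩ Y) :=
      card_le_card (image_subset_image (subset_univ X))
    _ ≤ r * #Y := hG Y hY

end SimpleGraph

lemma NbhdComplexityLinear.hasLinearTraces {V : Type} [Fintype V] [DecidableEq V]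
    {G : SimpleGraph V} [DecidableRel G.Adj] {r : ℕ} (hG : NbhdComplexityLinear G r)
    (S X : Finset V) : (S.image fun y ↦ G.neighborFinset y).HasLinearTraces X r := fun A _ hA ↦ by
  refine (card_le_card ?_).trans (hG A hA)
  rw [image_image]
  exact image_subset_image (subset_univ S)

/-- In a bipartite graph of linear neighborhood complexity with no twins in `X`, every
sufficiently large subset `Y'` of `Y` contains a pair of `δ`-near-twins. -/
theorem near_twins_of_linear_neighborhood_complexity :
    ∀ r ℓ : ℕ, 0 < r → 0 < ℓ → ∃ δ : ℕ, 0 < δ ∧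
      ∀ (V : Type) [Fintype V] [DecidableEq V] (G : SimpleGraph V) [DecidableRel G.Adj]
        (X Y : Finset V), Disjoint X Y → X ∪ Y = Finset.univ →
        (∀ u v : V, G.Adj u v → (u ∈ X ∧ v ∈ Y) ∨ (u ∈ Y ∧ v ∈ X)) →
        (∀ u ∈ X, ∀ v ∈ X, u ≠ v → G.neighborFinset u ≠ G.neighborFinset v) →
        NbhdComplexityLinear G r →
        ∀ Y' ⊆ Y, 2 ≤ Y'.card → Y.card ≤ ℓ * Y'.card →
          ∃ u ∈ Y', ∃ v ∈ Y', u ≠ v ∧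
            (symmDiff (G.neighborFinset u) (G.neighborFinset v)).card ≤ δ := by
  intro r ℓ hr hℓ
  refine ⟨16 * (2 * r + 1) * r ^ 2 * ℓ, by positivity, ?_⟩
  intro V _ _ G _ X Y hXY _ hbip htwin hG Y' hY'Y hY' hYY'
  by_contra! hfar
  set P := Y'.image fun y ↦ G.neighborFinset y
  have hNX : ∀ y ∈ Y, G.neighborFinset y ⊆ X := fun _ ↦
    G.neighborFinset_subset_of_bipartition hXY hbip
  have hNY : ∀ x ∈ X, G.neighborFinset x ⊆ Y := fun _ ↦
    G.neighborFinset_subset_of_bipartition hXY.symm fun u v h ↦ (hbip u v h).symm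
  have hPX : ∀ D ∈ P, D ⊆ X := forall_mem_image.2 fun y hy ↦ hNX y (hY'Y hy)
  have hsep : ∀ D ∈ P, ∀ D' ∈ P, D ≠ D' → 16 * (2 * r + 1) * r ^ 2 * ℓ < #(D ∆ D') :=
    forall_mem_image.2 fun u hu ↦ forall_mem_image.2 fun v hv huv ↦
      hfar u hu v hv fun h ↦ huv (h ▸ rfl)
  have hP : #P = #Y' := card_image_of_injOn fun u hu v hv huv ↦ by
    by_contra hne
    simpa [huv] using hfar u hu v hv hne
  obtain ⟨u, hu, v, hv, huv⟩ := one_lt_card.1 hY'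
  have hX : #X ≤ r * ℓ * #P :=
    calc #X ≤ r * #Y := G.card_le_mul_card_of_neighborFinset_injOn hNY htwin hG ⟨u, hY'Y hu⟩
      _ ≤ r * ℓ * #P := by rw [hP, mul_assoc]; gcongr
  have hXδ := (hG.hasLinearTraces Y' X).card_le_of_separated hPX hsep hX
  have hΔX : G.neighborFinset u ∆ G.neighborFinset v ⊆ X :=
    symmDiff_le_sup.trans (union_subset (hNX u (hY'Y hu)) (hNX v (hY'Y hv)))
  exact (hfar u hu v hv huv).not_ge ((card_le_card hΔX).trans hXδ)
end

section
/- Let G be a finite graph, let T be a spanning forest of G, and let f₀ be an edge of T. Then there exists a coloring φ : C*(T,f₀) \ {f₀} → {1,…,9} such that for every edge f ∈ E(T) with C*(T,f) ∩ (C*(T,f₀) \ {f₀}) ≠ ∅, there exists a color i ∈ {1,…,8} occurring an odd number of times on C*(T,f) ∩ (C*(T,f₀) \ {f₀}). -/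
/-- `T` is a spanning forest of `G`: an acyclic subgraph with the same vertex set whose
components have the same vertex sets as the components of `G` (equivalently, a maximal
acyclic subgraph of `G`). -/
def IsSpanningForest {V : Type} (G T : SimpleGraph V) : Prop :=
  T ≤ G ∧ T.IsAcyclic ∧ ∀ u v : V, G.Reachable u v ↔ T.Reachable u v

/-- The fundamental cut `C*(T, f)`: the set of edges of `G` whose endpoints lie in different
connected components of `T - f`. -/
def fundCut {V : Type} (G T : SimpleGraph V) (f : Sym2 V) : Set (Sym2 V) :=
  {e | e ∈ G.edgeSet ∧ ∃ u v : V, e = s(u, v) ∧ ¬ (T.deleteEdges {f}).Reachable u v}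

/-!
Root everything at the endpoint `x` of `f₀ = xy`, and let `D f` be the set of vertices that deleting
`f` separates from `x`. These sets form a laminar family, and each `D f` lies inside `D f₀` or is
disjoint from it. Orient every edge `e` of `S = C*(T, f₀) \ {f₀}` from its endpoint outside `D f₀`
to its endpoint inside; then `C*(T, f) ∩ S` is the set of `e ∈ S` whose tail, resp. head, lies in
`D f`. So these sets belong to the union of two laminar families `F`, `H`.

For two laminar families of finite sets, Hall's theorem gives a set `P` meeting every minimal
nonempty even member of `F` and missing a point of every minimal nonempty even member of `H`. Label
the ground set by `(ℤ/2)²` so that every nonempty member of the laminar family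
`{X ∩ P | X ∈ F} ∪ {X \ P | X ∈ H}` has nonzero sum, and color `a` by `(a ∈ P, label a)`: a member
of `F` meeting `P` sees some label an odd number of times on its part in `P`, and a nonempty member
missing `P` has odd size, so in both cases one of the 8 colors has odd multiplicity.
-/

open Finset

variable {α : Type*}

lemma exists_odd_card_filter_of_sum_ne_zero {M : Type*} [AddCommMonoid M] [DecidableEq M]
    (hM : ∀ w : M, w + w = 0) {s : Finset α} {g : α → M} (h : ∑ a ∈ s, g a ≠ 0) :
    ∃ w, Odd #{a ∈ s | g a = w} := by
  contrapose! h
  rw [sum_comp (fun w => w) g]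
  refine sum_eq_zero fun w _ => ?_
  obtain ⟨k, hk⟩ := Nat.not_odd_iff_even.1 (h w)
  rw [hk, add_nsmul, ← nsmul_add, hM, nsmul_zero]

lemma exists_odd_card_filter_of_odd_card {C : Type*} [DecidableEq C] {s : Finset α} (φ : α → C)
    (h : Odd #s) : ∃ c, Odd #{a ∈ s | φ a = c} := by
  contrapose! h
  rw [card_eq_sum_card_image φ s, Nat.not_odd_iff_even]
  exact even_sum _ fun c _ => Nat.not_odd_iff_even.1 (h c)

lemma exists_odd_card_filter {M : Type*} [AddCommMonoid M] [DecidableEq M]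
    (hM : ∀ w : M, w + w = 0) (φ : α → Bool × M) {X : Finset α} {b : Bool}
    (h : Odd #X ∨ ∑ a ∈ X with (φ a).1 = b, (φ a).2 ≠ 0) : ∃ c, Odd #{a ∈ X | φ a = c} := by
  rcases h with h | h
  · exact exists_odd_card_filter_of_odd_card φ h
  · obtain ⟨w, hw⟩ := exists_odd_card_filter_of_sum_ne_zero hM h
    refine ⟨(b, w), ?_⟩
    simpa only [filter_filter, Prod.ext_iff] using hw

lemma exists_odd_card_filter_of_minimal {M : Type*} [AddCommMonoid M] [DecidableEq M]
    (hM : ∀ w : M, w + w = 0) {K : Set (Finset α)} {σ : α → Bool} {b : Bool} {v : α → M}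
    (hK : ∀ A, Minimal (fun Y => Y ∈ K ∧ Y.Nonempty ∧ Even #Y) A → ∃ a ∈ A, σ a = b)
    (hv : ∀ X ∈ K, {a ∈ X | σ a = b}.Nonempty → ∑ a ∈ X with σ a = b, v a ≠ 0)
    {X : Finset α} (hX : X ∈ K) (hne : X.Nonempty) :
    ∃ c, Odd #{a ∈ X | (σ a, v a) = c} := by
  refine exists_odd_card_filter hM (fun a => (σ a, v a)) (b := b) ?_
  by_cases hside : {a ∈ X | σ a = b}.Nonempty
  · exact Or.inr (hv X hX hside)
  refine Or.inl (Nat.not_even_iff_odd.1 fun heven => hside ?_)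
  obtain ⟨A, hAX, hA⟩ := exists_minimal_le_of_wellFoundedLT
    (fun Y => Y ∈ K ∧ Y.Nonempty ∧ Even #Y) X ⟨hX, hne, heven⟩
  obtain ⟨a, ha, hab⟩ := hK A hA
  exact ⟨a, mem_filter.2 ⟨hAX ha, hab⟩⟩

theorem exists_set_meets_and_misses [DecidableEq α] {A B : Set (Finset α)}
    (hA : A.PairwiseDisjoint id) (hB : B.PairwiseDisjoint id) (hA₂ : ∀ X ∈ A, 2 ≤ #X)
    (hB₂ : ∀ Y ∈ B, 2 ≤ #Y) :
    ∃ P : Set α, (∀ X ∈ A, ∃ a ∈ X, a ∈ P) ∧ ∀ Y ∈ B, ∃ b ∈ Y, b ∉ P := by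
  -- Hall's condition for the sets of `A` and `B` together: every point lies in at most two of
  -- them, and each has at least two points. `P` collects the representatives of `A`.
  let t : A ⊕ B → Finset α := Sum.elim (↑) (↑)
  have hmult : ∀ (s : Finset (A ⊕ B)) (a : α), #{i ∈ s | a ∈ t i} ≤ 2 := by
    intro s a
    refine (card_le_card_of_injOn Sum.isLeft (fun _ _ => mem_coe.2 (mem_univ _)) ?_).trans_eq
      (by rfl : #(univ : Finset Bool) = 2)
    rintro (⟨X, hX⟩ | ⟨X, hX⟩) hi (⟨Y, hY⟩ | ⟨Y, hY⟩) hj h <;>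
      simp only [coe_filter, Set.mem_ofPred_eq, t, Sum.elim_inl, Sum.elim_inr, Sum.isLeft_inl,
        Sum.isLeft_inr, Sum.inl.injEq, Sum.inr.injEq, Subtype.mk.injEq, reduceCtorEq] at hi hj h ⊢
    · exact hA.elim_finset hX hY a hi.2 hj.2
    · exact hB.elim_finset hX hY a hi.2 hj.2
  have hall : ∀ s : Finset (A ⊕ B), #s ≤ #(s.biUnion t) := by
    intro s
    have := card_mul_le_card_mul (fun i a => a ∈ t i) (s := s) (t := s.biUnion t) (m := 2) (n := 2)
      (fun i hi => ?_) (fun a _ => hmult s a)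
    · omega
    · rw [bipartiteAbove, filter_mem_eq_inter, inter_eq_right.2 (subset_biUnion_of_mem t hi)]
      rcases i with ⟨X, hX⟩ | ⟨Y, hY⟩
      exacts [hA₂ X hX, hB₂ Y hY]
  obtain ⟨f, hfinj, hf⟩ := (all_card_le_biUnion_card_iff_exists_injective t).1 hall
  refine ⟨Set.range (f ∘ Sum.inl), fun X hX => ⟨_, hf (.inl ⟨X, hX⟩), ⟨X, hX⟩, rfl⟩,
    fun Y hY => ⟨_, hf (.inr ⟨Y, hY⟩), ?_⟩⟩
  rintro ⟨X, hX⟩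
  exact Sum.inl_ne_inr (hfinj hX)

def IsLaminar {β : Type*} [PartialOrder β] [OrderBot β] (F : Set β) : Prop :=
  ∀ ⦃X⦄, X ∈ F → ∀ ⦃Y⦄, Y ∈ F → X ≤ Y ∨ Y ≤ X ∨ Disjoint X Y

namespace IsLaminar

section Order

variable {β γ : Type*} [PartialOrder β] [OrderBot β] [PartialOrder γ] [OrderBot γ] {F G : Set β}

lemma subset (hG : IsLaminar G) (hFG : F ⊆ G) : IsLaminar F :=
  fun _ hX _ hY => hG (hFG hX) (hFG hY)

lemma union (hF : IsLaminar F) (hG : IsLaminar G) (hFG : ∀ X ∈ F, ∀ Y ∈ G, Disjoint X Y) :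
    IsLaminar (F ∪ G) := by
  rintro X (hX | hX) Y (hY | hY)
  · exact hF hX hY
  · exact Or.inr (Or.inr (hFG X hX Y hY))
  · exact Or.inr (Or.inr (hFG Y hY X hX).symm)
  · exact hG hX hY

lemma image (hF : IsLaminar F) {m : β → γ} (hm : Monotone m)
    (hd : ∀ ⦃X Y⦄, Disjoint X Y → Disjoint (m X) (m Y)) : IsLaminar (m '' F) := by
  rintro _ ⟨X, hX, rfl⟩ _ ⟨Y, hY, rfl⟩
  exact (hF hX hY).imp (fun h => hm h) (Or.imp (fun h => hm h) (fun h => hd h))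

lemma preimage (hF : IsLaminar F) {m : γ → β} (hm : ∀ ⦃X Y⦄, m X ≤ m Y → X ≤ Y)
    (hd : ∀ ⦃X Y⦄, Disjoint (m X) (m Y) → Disjoint X Y) : IsLaminar (m ⁻¹' F) :=
  fun _ hX _ hY => (hF hX hY).imp (fun h => hm h) (Or.imp (fun h => hm h) (fun h => hd h))

lemma pairwiseDisjoint_minimal (hF : IsLaminar F) (P : β → Prop) :
    {X | Minimal (fun Y => Y ∈ F ∧ P Y) X}.PairwiseDisjoint id := by
  intro X (hX : Minimal (fun Y => Y ∈ F ∧ P Y) X) Y (hY : Minimal (fun Y => Y ∈ F ∧ P Y) Y) hXY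
  rcases hF hX.1.1 hY.1.1 with h | h | h
  · exact absurd (hY.eq_of_le hX.1 h) hXY
  · exact absurd (hX.eq_of_le hY.1 h).symm hXY
  · exact h

end Order

lemma image_inter_preimage {β : Type*} {F : Set (Set β)} (hF : IsLaminar F) (S : Set α)
    (g : α → β) : IsLaminar ((fun X => S ∩ g ⁻¹' X) '' F) :=
  hF.image (fun _ _ h => Set.inter_subset_inter_right S (Set.preimage_mono h))
    (fun _ _ h => (h.preimage g).mono Set.inter_subset_right Set.inter_subset_right)

section Labeling

variable [DecidableEq α] {F : Set (Finset α)}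

theorem exists_sum_eq (hF : IsLaminar F) {S : Finset α} (hFS : ∀ X ∈ F, X ⊆ S)
    (hS : S.Nonempty) {t : ZMod 2 × ZMod 2} (ht : t ≠ 0) :
    ∃ v : α → ZMod 2 × ZMod 2, ∑ a ∈ S, v a = t ∧ ∀ X ∈ F, X.Nonempty → ∑ a ∈ X, v a ≠ 0 := by
  induction S using Finset.strongInduction generalizing F t with | H S ih => ?_
  by_cases hproper : ∃ X ∈ F, X.Nonempty ∧ X ≠ S
  swap
  · push Not at hproper
    obtain ⟨s, hs⟩ := hS
    refine ⟨Pi.single s t, by simp [hs], fun X hX hXne => ?_⟩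
    rw [hproper X hX hXne]
    simpa [hs] using ht
  -- Split off a maximal proper member `X₀`; label `X₀` and `S \ X₀` by induction, with nonzero
  -- targets adding up to `t`.
  obtain ⟨X₀, hX₀⟩ : ∃ X₀, Maximal (· ∈ {X | X ∈ F ∧ X.Nonempty ∧ X ≠ S}) X₀ :=
    ((S.powerset : Set (Finset α)).toFinite.subset
      fun X hX => mem_powerset.2 (hFS X hX.1)).exists_maximal hproper
  obtain ⟨hX₀F, hX₀ne, hX₀S⟩ := hX₀.1
  have hX₀sub : X₀ ⊂ S := ssubset_of_subset_of_ne (hFS X₀ hX₀F) hX₀S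
  obtain ⟨t₁, t₂, ht₁, ht₂, rfl⟩ := (by decide : ∀ t : ZMod 2 × ZMod 2,
    ∃ t₁ t₂ : ZMod 2 × ZMod 2, t₁ ≠ 0 ∧ t₂ ≠ 0 ∧ t₁ + t₂ = t) t
  obtain ⟨v₁, hv₁, hv₁F⟩ := ih X₀ hX₀sub (F := {X ∈ F | X ⊆ X₀}) (hF.subset (Set.sep_subset _ _))
    (fun X hX => hX.2) hX₀ne ht₁
  obtain ⟨v₂, hv₂, hv₂F⟩ := ih (S \ X₀) (sdiff_ssubset hX₀sub.subset hX₀ne)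
    (F := {X ∈ F | X ⊆ S \ X₀}) (hF.subset (Set.sep_subset _ _)) (fun X hX => hX.2)
    (sdiff_nonempty.2 hX₀sub.2) ht₂
  set v : α → ZMod 2 × ZMod 2 := fun a => if a ∈ X₀ then v₁ a else v₂ a
  have hin : ∀ Y ⊆ X₀, ∑ a ∈ Y, v a = ∑ a ∈ Y, v₁ a :=
    fun Y hY => sum_congr rfl fun a ha => if_pos (hY ha)
  have hout : ∀ Y ⊆ S \ X₀, ∑ a ∈ Y, v a = ∑ a ∈ Y, v₂ a :=
    fun Y hY => sum_congr rfl fun a ha => if_neg (mem_sdiff.1 (hY ha)).2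
  have hsum : ∑ a ∈ S, v a = t₁ + t₂ := by
    rw [← sum_sdiff hX₀sub.subset, hout _ subset_rfl, hin _ subset_rfl, hv₁, hv₂, add_comm]
  refine ⟨v, hsum, fun X hX hXne => ?_⟩
  rcases hF hX hX₀F with h | h | h
  · rw [hin X h]
    exact hv₁F X ⟨hX, h⟩ hXne
  · by_cases hXS : X = S
    · rwa [hXS, hsum]
    · rw [← hX₀.eq_of_le ⟨hX, hXne, hXS⟩ h, hin _ subset_rfl, hv₁]
      exact ht₁
  · have hXsub : X ⊆ S \ X₀ := subset_sdiff.2 ⟨hFS X hX, h⟩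
    rw [hout X hXsub]
    exact hv₂F X ⟨hX, hXsub⟩ hXne

theorem exists_sum_ne_zero [Fintype α] (hF : IsLaminar F) :
    ∃ v : α → ZMod 2 × ZMod 2, ∀ X ∈ F, X.Nonempty → ∑ a ∈ X, v a ≠ 0 := by
  cases isEmpty_or_nonempty α
  · exact ⟨0, fun X _ hX => absurd X.eq_empty_of_isEmpty hX.ne_empty⟩
  · obtain ⟨v, -, hv⟩ :=
      hF.exists_sum_eq (fun X _ => subset_univ X) univ_nonempty (t := (1, 0)) (by decide)
    exact ⟨v, hv⟩

theorem exists_coloring [Fintype α] {F H : Set (Finset α)}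
    (hF : IsLaminar F) (hH : IsLaminar H) :
    ∃ φ : α → Bool × ZMod 2 × ZMod 2, ∀ X ∈ F ∪ H, X.Nonempty → ∃ c, Odd #{a ∈ X | φ a = c} := by
  classical
  have two_le : ∀ K : Set (Finset α), ∀ A ∈ {A | Minimal (fun Y => Y ∈ K ∧ Y.Nonempty ∧ Even #Y) A},
      2 ≤ #A := by
    intro K A hA
    obtain ⟨k, hk⟩ := hA.1.2.2
    have := hA.1.2.1.card_pos
    omega
  obtain ⟨P, hPF, hPH⟩ := exists_set_meets_and_misses (hF.pairwiseDisjoint_minimal _)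
    (hH.pairwiseDisjoint_minimal _) (two_le F) (two_le H)
  set σ : α → Bool := fun a => decide (a ∈ P)
  have hside : ∀ {K : Set (Finset α)} (b : Bool), IsLaminar K →
      IsLaminar ((fun X : Finset α => X.filter (σ · = b)) '' K) := fun b hK =>
    hK.image (fun _ _ h => filter_subset_filter _ h) (fun _ _ h => disjoint_filter_filter h)
  have hdisj : ∀ X ∈ (fun X : Finset α => X.filter (σ · = true)) '' F,
      ∀ Y ∈ (fun X : Finset α => X.filter (σ · = false)) '' H, Disjoint X Y := by
    rintro _ ⟨X, -, rfl⟩ _ ⟨Y, -, rfl⟩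
    exact disjoint_left.2 fun a h₁ h₂ => by simp_all
  obtain ⟨v, hv⟩ := ((hside true hF).union (hside false hH) hdisj).exists_sum_ne_zero
  refine ⟨fun a => (σ a, v a), ?_⟩
  rintro X (hX | hX) hne
  · exact exists_odd_card_filter_of_minimal (by decide) (fun A hA => by simpa [σ] using hPF A hA)
      (fun X hX => hv _ (Or.inl ⟨X, hX, rfl⟩)) hX hne
  · exact exists_odd_card_filter_of_minimal (by decide) (fun A hA => by simpa [σ] using hPH A hA)
      (fun X hX => hv _ (Or.inr ⟨X, hX, rfl⟩)) hX hne

end Labeling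

theorem exists_coloring_ncard [Finite α] {F H : Set (Set α)} (hF : IsLaminar F)
    (hH : IsLaminar H) : ∃ φ : α → Bool × ZMod 2 × ZMod 2,
      ∀ X ∈ F ∪ H, X.Nonempty → ∃ c, Odd {a | a ∈ X ∧ φ a = c}.ncard := by
  classical
  have := Fintype.ofFinite α
  have hcoe {K : Set (Set α)} (hK : IsLaminar K) : IsLaminar (((↑) : Finset α → Set α) ⁻¹' K) :=
    hK.preimage (fun _ _ => coe_subset.1) (fun _ _ => disjoint_coe.1)
  obtain ⟨φ, hφ⟩ := (hcoe hF).exists_coloring (hcoe hH)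
  refine ⟨φ, fun X hX hne => ?_⟩
  lift X to Finset α using X.toFinite
  obtain ⟨c, hc⟩ := hφ X hX (coe_nonempty.1 hne)
  refine ⟨c, ?_⟩
  rwa [← Set.ncard_coe_finset, coe_filter] at hc

end IsLaminar

namespace SimpleGraph

variable {V : Type*} {H : SimpleGraph V}

lemma Reachable.deleteEdges_or {u v x y : V} (h : H.Reachable u v) :
    (H.deleteEdges {s(x, y)}).Reachable u v ∨
      (H.deleteEdges {s(x, y)}).Reachable u x ∧ (H.deleteEdges {s(x, y)}).Reachable y v ∨
      (H.deleteEdges {s(x, y)}).Reachable u y ∧ (H.deleteEdges {s(x, y)}).Reachable x v := by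
  obtain ⟨w⟩ := h
  induction w with
  | nil => exact Or.inl .rfl
  | @cons a b c hab q ih =>
    by_cases he : s(a, b) = s(x, y)
    · rcases Sym2.eq_iff.1 he with ⟨rfl, rfl⟩ | ⟨rfl, rfl⟩
      · rcases ih with h | ⟨h₁, h₂⟩ | ⟨-, h₂⟩
        exacts [Or.inr (Or.inl ⟨.rfl, h⟩), Or.inl (h₁.symm.trans h₂), Or.inl h₂]
      · rcases ih with h | ⟨-, h₂⟩ | ⟨h₁, h₂⟩
        exacts [Or.inr (Or.inr ⟨.rfl, h⟩), Or.inl h₂, Or.inl (h₁.symm.trans h₂)]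
    · have hab' : (H.deleteEdges {s(x, y)}).Adj a b := deleteEdges_adj.2 ⟨hab, he⟩
      rcases ih with h | ⟨h₁, h₂⟩ | ⟨h₁, h₂⟩
      exacts [Or.inl (hab'.reachable.trans h), Or.inr (Or.inl ⟨hab'.reachable.trans h₁, h₂⟩),
        Or.inr (Or.inr ⟨hab'.reachable.trans h₁, h₂⟩)]

def farSide (H : SimpleGraph V) (r : V) (f : Sym2 V) : Set V :=
  {w | H.Reachable w r ∧ ¬(H.deleteEdges {f}).Reachable w r}

variable {r : V}

lemma farSide_subset_farSide {f : Sym2 V} {c d : V} (hc : ¬(H.deleteEdges {f}).Reachable c r) :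
    H.farSide r s(c, d) ⊆ H.farSide r f := by
  rintro w ⟨hw, hwg⟩
  refine ⟨hw, fun hwf => ?_⟩
  rcases hwf.deleteEdges_or (x := c) (y := d) with h | ⟨hwc, -⟩ | ⟨-, hcr⟩
  · exact hwg (h.mono (deleteEdges_mono (deleteEdges_le _)))
  · exact hc ((hwc.mono (deleteEdges_le _)).symm.trans hwf)
  · exact hc (hcr.mono (deleteEdges_le _))

lemma disjoint_farSide {a b c d : V} (hc : (H.deleteEdges {s(a, b)}).Reachable c r)
    (hd : (H.deleteEdges {s(a, b)}).Reachable d r) (ha : (H.deleteEdges {s(c, d)}).Reachable a r)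
    (hb : (H.deleteEdges {s(c, d)}).Reachable b r) :
    Disjoint (H.farSide r s(a, b)) (H.farSide r s(c, d)) := by
  refine Set.disjoint_left.2 fun z ⟨hz, hzf⟩ ⟨_, hzg⟩ => ?_
  have key {p : V} (hp : (H.deleteEdges {s(c, d)}).Reachable p r)
      (hzp : (H.deleteEdges {s(a, b)}).Reachable z p) : False := by
    rcases hzp.deleteEdges_or (x := c) (y := d) with h | ⟨hzc, -⟩ | ⟨hzd, -⟩
    · exact hzg ((h.mono (deleteEdges_mono (deleteEdges_le _))).trans hp)
    · exact hzf ((hzc.mono (deleteEdges_le _)).trans hc)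
    · exact hzf ((hzd.mono (deleteEdges_le _)).trans hd)
  rcases hz.deleteEdges_or (x := a) (y := b) with h | ⟨hza, -⟩ | ⟨hzb, -⟩
  exacts [hzf h, key ha hza, key hb hzb]

theorem isLaminar_range_farSide (H : SimpleGraph V) (r : V) :
    IsLaminar (Set.range (H.farSide r)) := by
  rintro _ ⟨f, rfl⟩ _ ⟨g, rfl⟩
  induction f using Sym2.ind with | _ a b => ?_
  induction g using Sym2.ind with | _ c d => ?_
  by_cases hc : ¬(H.deleteEdges {s(a, b)}).Reachable c r
  · exact Or.inr (Or.inl (farSide_subset_farSide hc))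
  by_cases hd : ¬(H.deleteEdges {s(a, b)}).Reachable d r
  · exact Or.inr (Or.inl (Sym2.eq_swap (a := c) ▸ farSide_subset_farSide hd))
  by_cases ha : ¬(H.deleteEdges {s(c, d)}).Reachable a r
  · exact Or.inl (farSide_subset_farSide ha)
  by_cases hb : ¬(H.deleteEdges {s(c, d)}).Reachable b r
  · exact Or.inl (Sym2.eq_swap (a := a) ▸ farSide_subset_farSide hb)
  exact Or.inr (Or.inr (disjoint_farSide (not_not.1 hc) (not_not.1 hd) (not_not.1 ha)
    (not_not.1 hb)))

lemma reachable_deleteEdges_of_mem_farSide {f : Sym2 V} {u v : V} (hu : u ∈ H.farSide r f)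
    (hv : v ∈ H.farSide r f) : (H.deleteEdges {f}).Reachable u v := by
  induction f using Sym2.ind with | _ a b => ?_
  rcases hu.1.deleteEdges_or (x := a) (y := b) with h | ⟨hua, hbr⟩ | ⟨hub, har⟩
  · exact absurd h hu.2
  · rcases hv.1.deleteEdges_or (x := a) (y := b) with h | ⟨hva, -⟩ | ⟨hvb, -⟩
    exacts [absurd h hv.2, hua.trans hva.symm, absurd (hvb.trans hbr) hv.2]
  · rcases hv.1.deleteEdges_or (x := a) (y := b) with h | ⟨hva, -⟩ | ⟨hvb, -⟩
    exacts [absurd h hv.2, absurd (hva.trans har) hv.2, hub.trans hvb.symm]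

lemma not_reachable_deleteEdges_iff {f : Sym2 V} {u v : V} (hu : H.Reachable u r)
    (hv : H.Reachable v r) :
    ¬(H.deleteEdges {f}).Reachable u v ↔ (u ∈ H.farSide r f ↔ v ∉ H.farSide r f) := by
  have hu' : u ∉ H.farSide r f ↔ (H.deleteEdges {f}).Reachable u r := by simp [farSide, hu]
  have hv' : v ∉ H.farSide r f ↔ (H.deleteEdges {f}).Reachable v r := by simp [farSide, hv]
  have hfar : u ∈ H.farSide r f → v ∈ H.farSide r f → (H.deleteEdges {f}).Reachable u v :=
    reachable_deleteEdges_of_mem_farSide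
  have hnear : (H.deleteEdges {f}).Reachable u r → (H.deleteEdges {f}).Reachable v r →
      (H.deleteEdges {f}).Reachable u v := fun h h' => h.trans h'.symm
  have hsame : (H.deleteEdges {f}).Reachable u v →
      ((H.deleteEdges {f}).Reachable u r ↔ (H.deleteEdges {f}).Reachable v r) :=
    fun h => ⟨h.symm.trans, h.trans⟩
  tauto

end SimpleGraph

open SimpleGraph

section FundamentalCut

variable {V : Type} {G T : SimpleGraph V}

lemma mem_fundCut_iff {f : Sym2 V} {u v : V} :
    s(u, v) ∈ fundCut G T f ↔ G.Adj u v ∧ ¬(T.deleteEdges {f}).Reachable u v := by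
  simp only [fundCut, Set.mem_ofPred_eq, mem_edgeSet, Sym2.eq_iff]
  constructor
  · rintro ⟨h, u', v', ⟨rfl, rfl⟩ | ⟨rfl, rfl⟩, h'⟩
    exacts [⟨h, h'⟩, ⟨h, fun h'' => h' h''.symm⟩]
  · exact fun ⟨h, h'⟩ => ⟨h, u, v, Or.inl ⟨rfl, rfl⟩, h'⟩

lemma exists_eq_mk_of_mem_fundCut (hGT : ∀ ⦃u v⦄, G.Adj u v → T.Reachable u v) {x y : V}
    {e : Sym2 V} (he : e ∈ fundCut G T s(x, y)) :
    ∃ u v, e = s(u, v) ∧ G.Adj u v ∧ (T.deleteEdges {s(x, y)}).Reachable u x ∧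
      v ∈ T.farSide x s(x, y) := by
  induction e using Sym2.ind with | _ u v => ?_
  obtain ⟨huv, hcut⟩ := mem_fundCut_iff.1 he
  have hT := hGT huv
  rcases hT.deleteEdges_or (x := x) (y := y) with h | ⟨hux, -⟩ | ⟨-, hxv⟩
  · exact absurd h hcut
  · exact ⟨u, v, rfl, huv, hux, hT.symm.trans (hux.mono (deleteEdges_le _)),
      fun hvx => hcut (hux.trans hvx.symm)⟩
  · exact ⟨v, u, Sym2.eq_swap, huv.symm, hxv.symm, hT.trans (hxv.symm.mono (deleteEdges_le _)),
      fun hux => hcut (hux.trans hxv)⟩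

lemma farSide_subset_or_disjoint {x y : V} (hxy : T.Adj x y)
    (hbr : ¬(T.deleteEdges {s(x, y)}).Reachable x y) (f : Sym2 V) :
    T.farSide x f ⊆ T.farSide x s(x, y) ∨ Disjoint (T.farSide x f) (T.farSide x s(x, y)) := by
  rcases isLaminar_range_farSide T x ⟨f, rfl⟩ ⟨s(x, y), rfl⟩ with h | h | h
  · exact Or.inl h
  · have hy : y ∈ T.farSide x s(x, y) := ⟨hxy.reachable.symm, fun h => hbr h.symm⟩
    -- otherwise the edge `xy` survives in `T - f`, so `y` is not cut off from `x`
    obtain rfl : f = s(x, y) := by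
      by_contra hne
      refine (h hy).2 (deleteEdges_adj.2 ⟨hxy.symm, ?_⟩).reachable
      rw [Set.mem_singleton_iff, Sym2.eq_swap]
      exact Ne.symm hne
    exact Or.inl subset_rfl
  · exact Or.inr h

theorem exists_isLaminar_cover (hGT : ∀ ⦃u v⦄, G.Adj u v → T.Reachable u v) {x y : V}
    (hxy : T.Adj x y) (hbr : ¬(T.deleteEdges {s(x, y)}).Reachable x y) {S : Set (Sym2 V)}
    (hS : S ⊆ fundCut G T s(x, y)) :
    ∃ F H : Set (Set (Sym2 V)), IsLaminar F ∧ IsLaminar H ∧ ∀ f, fundCut G T f ∩ S ∈ F ∪ H := by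
  have horient (e : Sym2 V) : ∃ p : V × V, e ∈ S → e = s(p.1, p.2) ∧ G.Adj p.1 p.2 ∧
      (T.deleteEdges {s(x, y)}).Reachable p.1 x ∧ p.2 ∈ T.farSide x s(x, y) := by
    by_cases he : e ∈ S
    · obtain ⟨u, v, h⟩ := exists_eq_mk_of_mem_fundCut hGT (hS he)
      exact ⟨(u, v), fun _ => h⟩
    · exact ⟨(x, x), fun h => absurd h he⟩
  -- `p e` orients `e ∈ S` from the side of `x` to the side of `y`; off `S` it is arbitrary.
  choose p hp using horient
  have hcut (f : Sym2 V) {e : Sym2 V} (he : e ∈ S) :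
      e ∈ fundCut G T f ↔ ((p e).1 ∈ T.farSide x f ↔ (p e).2 ∉ T.farSide x f) := by
    obtain ⟨heq, hadj, hu, hv⟩ := hp e he
    conv_lhs => rw [heq, mem_fundCut_iff, and_iff_right hadj]
    exact not_reachable_deleteEdges_iff (hu.mono (deleteEdges_le _)) hv.1
  refine ⟨_, _, (isLaminar_range_farSide T x).image_inter_preimage S (fun e => (p e).1),
    (isLaminar_range_farSide T x).image_inter_preimage S (fun e => (p e).2), fun f => ?_⟩
  rcases farSide_subset_or_disjoint hxy hbr f with h | h
  · refine Or.inr ⟨_, ⟨f, rfl⟩, Set.ext fun e => ?_⟩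
    by_cases he : e ∈ S
    · have hnear : (p e).1 ∉ T.farSide x f := fun h' => (h h').2 (hp e he).2.2.1
      simp only [Set.mem_inter_iff, Set.mem_preimage, he, hcut f he, hnear]
      tauto
    · simp [he]
  · refine Or.inl ⟨_, ⟨f, rfl⟩, Set.ext fun e => ?_⟩
    by_cases he : e ∈ S
    · have hfar : (p e).2 ∉ T.farSide x f := fun h' => h.ne_of_mem h' (hp e he).2.2.2 rfl
      simp only [Set.mem_inter_iff, Set.mem_preimage, he, hcut f he, hfar]
      tauto
    · simp [he]

end FundamentalCut

/-- The fundamental cuts of a fixed fundamental cut `C*(T, f₀)` minus `f₀` can be 9-colored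
so that every fundamental cut meeting `C*(T, f₀) \ {f₀}` sees one of the first 8 colors an
odd number of times. -/
theorem one_fundamental_cut_coloring {V : Type} [Fintype V] (G T : SimpleGraph V)
    (hT : IsSpanningForest G T) (f₀ : Sym2 V) (hf₀ : f₀ ∈ T.edgeSet) :
    ∃ φ : Sym2 V → Fin 9,
      ∀ f ∈ T.edgeSet, (fundCut G T f ∩ (fundCut G T f₀ \ {f₀})).Nonempty →
        ∃ i : Fin 9, (i : ℕ) < 8 ∧
          Odd {e | e ∈ fundCut G T f ∩ (fundCut G T f₀ \ {f₀}) ∧ φ e = i}.ncard := by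
  obtain ⟨-, hac, hreach⟩ := hT
  induction f₀ using Sym2.ind with | _ x y => ?_
  obtain ⟨F, H, hF, hH, hcover⟩ := exists_isLaminar_cover
    (fun u v huv => (hreach u v).1 huv.reachable) hf₀
    (isAcyclic_iff_forall_adj_isBridge.1 hac hf₀) Set.sdiff_subset
  obtain ⟨φ, hφ⟩ := hF.exists_coloring_ncard hH
  let κ : Bool × ZMod 2 × ZMod 2 ≃ Fin 8 := Fintype.equivFinOfCardEq rfl
  refine ⟨fun e => (κ (φ e)).castSucc, fun f _ hne => ?_⟩
  obtain ⟨c, hc⟩ := hφ _ (hcover f) hne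
  refine ⟨(κ c).castSucc, (κ c).isLt, ?_⟩
  simpa only [Fin.castSucc_inj, κ.apply_eq_iff_eq] using hc
end

section
/- Let G be a finite simple graph and let t be a positive integer. If every induced subgraph of G that is bipartite has odd chromatic number at most t, then χ_o(G) ≤ t² · χ(G), where χ(G) is the ordinary chromatic number. -/
/-- `G` is bipartite: its vertex set splits into two parts with every edge across. -/
def IsBipartiteGraph {V : Type u} (G : SimpleGraph V) : Prop :=
  ∃ X : Set V, ∀ u v : V, G.Adj u v → (u ∈ X ↔ v ∉ X)

/-- `G` has an odd coloring with `k` colors: a proper coloring in which every non-isolated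
vertex sees some color an odd number of times on its open neighborhood. -/
def HasOddColoring {V : Type u} (G : SimpleGraph V) (k : ℕ) : Prop :=
  ∃ c : V → Fin k, (∀ u v : V, G.Adj u v → c u ≠ c v) ∧
    ∀ v : V, (G.neighborSet v).Nonempty →
      ∃ i : Fin k, Odd {u | u ∈ G.neighborSet v ∧ c u = i}.ncard

section OddAux
variable {V : Type} {s : ℕ}

open Classical in
/-- The set of colors appearing on the neighborhood of `v`. -/
noncomputable def OddL (G : SimpleGraph V) (f : V → Fin s) (v : V) : Finset (Fin s) :=
  Finset.univ.filter (fun j => ∃ u, G.Adj v u ∧ f u = j)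

open Classical in
noncomputable def OddU (G : SimpleGraph V) (f : V → Fin s) (v : V) : Finset (Fin s) :=
  (OddL G f v).filter (fun j => f v < j)

abbrev OddUp (G : SimpleGraph V) (f : V → Fin s) (v : V) : Prop := (OddU G f v).Nonempty

open Classical in
noncomputable def OddTgt (G : SimpleGraph V) (f : V → Fin s) (v : V) : Fin s :=
  if h : (OddU G f v).Nonempty then (OddU G f v).min' h
  else if h2 : (OddL G f v).Nonempty then (OddL G f v).max' h2
  else f v

lemma mem_OddL {G : SimpleGraph V} {f : V → Fin s} {v : V} {j : Fin s} :
    j ∈ OddL G f v ↔ ∃ u, G.Adj v u ∧ f u = j := by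
  classical simp [OddL]

lemma OddL_nonempty {G : SimpleGraph V} {f : V → Fin s} {v u : V} (h : G.Adj v u) :
    (OddL G f v).Nonempty := ⟨f u, mem_OddL.2 ⟨u, h, rfl⟩⟩

lemma OddTgt_mem {G : SimpleGraph V} {f : V → Fin s} {v : V}
    (h : (OddL G f v).Nonempty) : OddTgt G f v ∈ OddL G f v := by
  classical
  by_cases h1 : (OddU G f v).Nonempty
  · have := (OddU G f v).min'_mem h1
    simp only [OddU, Finset.mem_filter] at this
    have he : OddTgt G f v = (OddU G f v).min' h1 := dif_pos h1
    rw [he]; exact this.1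
  · have he : OddTgt G f v = (OddL G f v).max' h := by
      unfold OddTgt; rw [dif_neg h1, dif_pos h]
    rw [he]; exact (OddL G f v).max'_mem h

lemma OddTgt_lt_of_up {G : SimpleGraph V} {f : V → Fin s} {v : V}
    (h : OddUp G f v) : f v < OddTgt G f v := by
  classical
  have h1 : OddTgt G f v = (OddU G f v).min' h := dif_pos h
  have := (OddU G f v).min'_mem h
  simp only [OddU, Finset.mem_filter] at this
  rw [h1]; exact this.2

lemma OddTgt_le_of_up {G : SimpleGraph V} {f : V → Fin s} {v : V} {j : Fin s}
    (h : OddUp G f v) (hj : j ∈ OddU G f v) : OddTgt G f v ≤ j := by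
  classical
  have h1 : OddTgt G f v = (OddU G f v).min' h := dif_pos h
  rw [h1]; exact Finset.min'_le _ _ hj

lemma OddTgt_lt_of_down {G : SimpleGraph V} {f : V → Fin s}
    (hf : ∀ u v : V, G.Adj u v → f u ≠ f v) {v : V}
    (h : ¬ OddUp G f v) (hL : (OddL G f v).Nonempty) : OddTgt G f v < f v := by
  classical
  have h1 : OddTgt G f v = (OddL G f v).max' hL := by
    unfold OddTgt; rw [dif_neg h, dif_pos hL]
  have hmem : OddTgt G f v ∈ OddL G f v := OddTgt_mem hL
  obtain ⟨u, hu, hfu⟩ := mem_OddL.1 hmem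
  have hne : OddTgt G f v ≠ f v := by rw [← hfu]; exact (hf v u hu).symm
  have hnlt : ¬ (f v < OddTgt G f v) := by
    intro hlt
    exact h ⟨OddTgt G f v, by simp only [OddU, Finset.mem_filter]; exact ⟨hmem, hlt⟩⟩
  exact lt_of_le_of_ne (not_lt.mp hnlt) hne

lemma OddTgt_ge_of_down {G : SimpleGraph V} {f : V → Fin s} {v : V} {j : Fin s}
    (h : ¬ OddUp G f v) (hL : (OddL G f v).Nonempty) (hj : j ∈ OddL G f v) :
    j ≤ OddTgt G f v := by
  classical
  have h1 : OddTgt G f v = (OddL G f v).max' hL := by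
    unfold OddTgt; rw [dif_neg h, dif_pos hL]
  rw [h1]; exact Finset.le_max' _ _ hj

lemma odd_upup_aux {G : SimpleGraph V} {f : V → Fin s} {u v : V}
    (hadj : G.Adj u v) (hlt : f u < f v)
    (hu : OddUp G f u) (hv : OddUp G f v) : OddTgt G f u ≠ OddTgt G f v := by
  classical
  have h1 : OddTgt G f u ≤ f v := by
    apply OddTgt_le_of_up hu
    simp only [OddU, Finset.mem_filter]
    exact ⟨mem_OddL.2 ⟨v, hadj, rfl⟩, hlt⟩
  have h2 : f v < OddTgt G f v := OddTgt_lt_of_up hv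
  exact ne_of_lt (lt_of_le_of_lt h1 h2)

lemma odd_upup {G : SimpleGraph V} {f : V → Fin s}
    (hf : ∀ u v : V, G.Adj u v → f u ≠ f v) {u v : V}
    (hadj : G.Adj u v) (hu : OddUp G f u) (hv : OddUp G f v) :
    OddTgt G f u ≠ OddTgt G f v := by
  rcases lt_or_gt_of_ne (hf u v hadj) with h | h
  · exact odd_upup_aux hadj h hu hv
  · exact (odd_upup_aux hadj.symm h hv hu).symm

lemma odd_downdown_aux {G : SimpleGraph V} {f : V → Fin s}
    (hf : ∀ u v : V, G.Adj u v → f u ≠ f v) {u v : V}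
    (hadj : G.Adj u v) (hlt : f u < f v)
    (hu : ¬ OddUp G f u) (hv : ¬ OddUp G f v) : OddTgt G f u ≠ OddTgt G f v := by
  have h1 : OddTgt G f u < f u := OddTgt_lt_of_down hf hu (OddL_nonempty hadj)
  have h2 : f u ≤ OddTgt G f v :=
    OddTgt_ge_of_down hv (OddL_nonempty hadj.symm) (mem_OddL.2 ⟨u, hadj.symm, rfl⟩)
  exact ne_of_lt (lt_of_lt_of_le h1 h2)

lemma odd_downdown {G : SimpleGraph V} {f : V → Fin s}
    (hf : ∀ u v : V, G.Adj u v → f u ≠ f v) {u v : V}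
    (hadj : G.Adj u v) (hu : ¬ OddUp G f u) (hv : ¬ OddUp G f v) :
    OddTgt G f u ≠ OddTgt G f v := by
  rcases lt_or_gt_of_ne (hf u v hadj) with h | h
  · exact odd_downdown_aux hf hadj h hu hv
  · exact (odd_downdown_aux hf hadj.symm h hv hu).symm

/-- Vertex class `j` together with the up-vertices targeting `j`. -/
def OddVA (G : SimpleGraph V) (f : V → Fin s) (j : Fin s) : Set V :=
  {x | f x = j} ∪ {x | OddUp G f x ∧ OddTgt G f x = j}

def OddVB (G : SimpleGraph V) (f : V → Fin s) (j : Fin s) : Set V :=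
  {x | f x = j} ∪ {x | ¬ OddUp G f x ∧ (OddL G f x).Nonempty ∧ OddTgt G f x = j}

section OddAux2b
variable {V : Type} {s : ℕ}

lemma oddVA_bip (G : SimpleGraph V) (f : V → Fin s)
    (hf : ∀ u v : V, G.Adj u v → f u ≠ f v) (j : Fin s) :
    IsBipartiteGraph (G.induce (OddVA G f j)) := by
  refine ⟨{a | f a.1 = j}, ?_⟩
  rintro a b hab
  have hadj : G.Adj a.1 b.1 := hab
  constructor
  · intro ha hb
    exact hf _ _ hadj (ha.trans (Set.mem_setOf_eq ▸ hb).symm)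
  · intro hb
    by_contra ha
    have ha' : OddUp G f a.1 ∧ OddTgt G f a.1 = j := a.2.resolve_left ha
    have hb' : OddUp G f b.1 ∧ OddTgt G f b.1 = j := b.2.resolve_left hb
    exact odd_upup hf hadj ha'.1 hb'.1 (ha'.2.trans hb'.2.symm)

lemma oddVB_bip (G : SimpleGraph V) (f : V → Fin s)
    (hf : ∀ u v : V, G.Adj u v → f u ≠ f v) (j : Fin s) :
    IsBipartiteGraph (G.induce (OddVB G f j)) := by
  refine ⟨{a | f a.1 = j}, ?_⟩
  rintro a b hab
  have hadj : G.Adj a.1 b.1 := hab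
  constructor
  · intro ha hb
    exact hf _ _ hadj (ha.trans (Set.mem_setOf_eq ▸ hb).symm)
  · intro hb
    by_contra ha
    have ha' := a.2.resolve_left ha
    have hb' := b.2.resolve_left hb
    exact odd_downdown hf hadj ha'.1 hb'.1 (ha'.2.2.trans hb'.2.2.symm)

lemma odd_fiber {V : Type} [Fintype V] {m : ℕ} (A : Set V) (g : V → Fin m)
    (hA : Odd A.ncard) : ∃ r : Fin m, Odd {u | u ∈ A ∧ g u = r}.ncard := by
  classical
  by_contra hc
  push_neg at hc
  have heven : ∀ r, Even {u | u ∈ A ∧ g u = r}.ncard := by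
    intro r; exact Nat.not_odd_iff_even.mp (hc r)
  have h1 : A.ncard = ∑ r : Fin m, {u | u ∈ A ∧ g u = r}.ncard := by
    rw [Set.ncard_eq_toFinset_card' A]
    rw [Finset.card_eq_sum_card_fiberwise
      (f := g) (t := Finset.univ) (fun x _ => Finset.mem_univ (g x))]
    refine Finset.sum_congr rfl fun r _ => ?_
    rw [Set.ncard_eq_toFinset_card']
    congr 1
    ext u
    simp [Set.mem_toFinset]
  rw [h1] at hA
  have : Even (∑ r : Fin m, {u | u ∈ A ∧ g u = r}.ncard) :=
    Finset.even_sum _ (fun r _ => heven r)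
  exact (Nat.not_odd_iff_even.2 this) hA

end OddAux2b


/-- If every bipartite induced subgraph of `G` has odd chromatic number at most `t`,
then `χ_o(G) ≤ t² · χ(G)`. -/
theorem odd_coloring_from_bipartite_induced {V : Type} [Fintype V]
    (G : SimpleGraph V) (t : ℕ) (ht : 0 < t)
    (hbip : ∀ S : Set V, IsBipartiteGraph (G.induce S) → HasOddColoring (G.induce S) t)
    (s : ℕ) (hs : G.Colorable s) :
    HasOddColoring G (t * t * s) := by
  classical
  obtain ⟨f0⟩ := hs
  set f : V → Fin s := ⇑f0 with hfdef
  have hf : ∀ u v : V, G.Adj u v → f u ≠ f v := fun u v h => f0.valid h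
  have hA := fun j => hbip (OddVA G f j) (oddVA_bip G f hf j)
  choose cA hA1 hA2 using hA
  have hB := fun j => hbip (OddVB G f j) (oddVB_bip G f hf j)
  choose cB hB1 hB2 using hB
  have memA : ∀ v : V, v ∈ OddVA G f (f v) := fun v => Or.inl rfl
  have memB : ∀ v : V, v ∈ OddVB G f (f v) := fun v => Or.inl rfl
  set E : (Fin t × Fin t) × Fin s ≃ Fin (t * t * s) :=
    (Equiv.prodCongr finProdFinEquiv (Equiv.refl (Fin s))).trans finProdFinEquiv with hE
  set xA : V → Fin t := fun v => cA (f v) ⟨v, memA v⟩ with hxA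
  set xB : V → Fin t := fun v => cB (f v) ⟨v, memB v⟩ with hxB
  have keyA : ∀ (j : Fin s) (u : V) (h : f u = j), xA u = cA j ⟨u, Or.inl h⟩ := by
    rintro j u rfl; rfl
  have keyB : ∀ (j : Fin s) (u : V) (h : f u = j), xB u = cB j ⟨u, Or.inl h⟩ := by
    rintro j u rfl; rfl
  refine ⟨fun v => E ((xA v, xB v), f v), ?_, ?_⟩
  · intro u v huv h
    have h2 : f u = f v := by
      have := congrArg (fun z => (E.symm z).2) h
      simpa using this
    exact hf u v huv h2
  · intro v hv
    obtain ⟨w, hw⟩ := hv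
    have hw : G.Adj v w := hw
    have hLne : (OddL G f v).Nonempty := OddL_nonempty hw
    have hjL : OddTgt G f v ∈ OddL G f v := OddTgt_mem hLne
    set j := OddTgt G f v with hj
    obtain ⟨w', hw', hfw'⟩ := mem_OddL.1 hjL
    by_cases hup : OddUp G f v
    · -- up case: use coloring cA j
      have hvA : v ∈ OddVA G f j := Or.inr ⟨hup, hj.symm⟩
      have hnb : ((G.induce (OddVA G f j)).neighborSet ⟨v, hvA⟩).Nonempty :=
        ⟨⟨w', Or.inl hfw'⟩, hw'⟩
      obtain ⟨p, hp⟩ := hA2 j ⟨v, hvA⟩ hnb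
      have himg : Subtype.val ''
          {u | u ∈ (G.induce (OddVA G f j)).neighborSet ⟨v, hvA⟩ ∧ cA j u = p}
          = {u : V | G.Adj v u ∧ f u = j ∧ xA u = p} := by
        ext u
        simp only [Set.mem_image, Set.mem_setOf_eq, SimpleGraph.mem_neighborSet]
        constructor
        · rintro ⟨a, ⟨hadj, hpa⟩, rfl⟩
          have hadj' : G.Adj v a.1 := hadj
          have hfu : f a.1 = j := by
            rcases a.2 with h | h
            · exact h
            · exact False.elim ((odd_upup hf hadj' hup h.1) (hj.symm.trans h.2.symm))
          refine ⟨hadj', hfu, ?_⟩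
          rw [keyA j a.1 hfu]
          have : (⟨a.1, Or.inl hfu⟩ : ↥(OddVA G f j)) = a := Subtype.ext rfl
          rw [this]; exact hpa
        · rintro ⟨hadj, hfu, hxa⟩
          refine ⟨⟨u, Or.inl hfu⟩, ⟨hadj, ?_⟩, rfl⟩
          rw [← keyA j u hfu]; exact hxa
      have hodd' : Odd {u : V | G.Adj v u ∧ f u = j ∧ xA u = p}.ncard := by
        rw [← himg, Set.ncard_image_of_injective _ Subtype.val_injective]
        exact hp
      obtain ⟨r, hr⟩ := odd_fiber _ xB hodd'
      refine ⟨E ((p, r), j), ?_⟩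
      have hset : {u | u ∈ G.neighborSet v ∧ E ((xA u, xB u), f u) = E ((p, r), j)}
          = {u | u ∈ {u : V | G.Adj v u ∧ f u = j ∧ xA u = p} ∧ xB u = r} := by
        ext u
        simp only [Set.mem_setOf_eq, SimpleGraph.mem_neighborSet,
          Equiv.apply_eq_iff_eq, Prod.mk.injEq]
        tauto
      rw [← hset] at hr
      exact hr
    · -- down case: use coloring cB j
      have hvB : v ∈ OddVB G f j := Or.inr ⟨hup, hLne, hj.symm⟩
      have hnb : ((G.induce (OddVB G f j)).neighborSet ⟨v, hvB⟩).Nonempty :=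
        ⟨⟨w', Or.inl hfw'⟩, hw'⟩
      obtain ⟨p, hp⟩ := hB2 j ⟨v, hvB⟩ hnb
      have himg : Subtype.val ''
          {u | u ∈ (G.induce (OddVB G f j)).neighborSet ⟨v, hvB⟩ ∧ cB j u = p}
          = {u : V | G.Adj v u ∧ f u = j ∧ xB u = p} := by
        ext u
        simp only [Set.mem_image, Set.mem_setOf_eq, SimpleGraph.mem_neighborSet]
        constructor
        · rintro ⟨a, ⟨hadj, hpa⟩, rfl⟩
          have hadj' : G.Adj v a.1 := hadj
          have hfu : f a.1 = j := by
            rcases a.2 with h | h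
            · exact h
            · exact False.elim ((odd_downdown hf hadj' hup h.1) (hj.symm.trans h.2.2.symm))
          refine ⟨hadj', hfu, ?_⟩
          rw [keyB j a.1 hfu]
          have : (⟨a.1, Or.inl hfu⟩ : ↥(OddVB G f j)) = a := Subtype.ext rfl
          rw [this]; exact hpa
        · rintro ⟨hadj, hfu, hxb⟩
          refine ⟨⟨u, Or.inl hfu⟩, ⟨hadj, ?_⟩, rfl⟩
          rw [← keyB j u hfu]; exact hxb
      have hodd' : Odd {u : V | G.Adj v u ∧ f u = j ∧ xB u = p}.ncard := by
        rw [← himg, Set.ncard_image_of_injective _ Subtype.val_injective]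
        exact hp
      obtain ⟨q, hq⟩ := odd_fiber _ xA hodd'
      refine ⟨E ((q, p), j), ?_⟩
      have hset : {u | u ∈ G.neighborSet v ∧ E ((xA u, xB u), f u) = E ((q, p), j)}
          = {u | u ∈ {u : V | G.Adj v u ∧ f u = j ∧ xB u = p} ∧ xA u = q} := by
        ext u
        simp only [Set.mem_setOf_eq, SimpleGraph.mem_neighborSet,
          Equiv.apply_eq_iff_eq, Prod.mk.injEq]
        tauto
      rw [← hset] at hq
      exact hq
end OddAux
end

section
/- For every integer n ≥ 2, let G be the graph obtained from the complete graph K_n by subdividing each edge exactly once (replacing each edge uv by a new vertex adjacent to u and v) and then adding one further new vertex adjacent to all other vertices of the resulting graph. Then χ_pcf(G) ≤ 4 and χ_so(G) ≥ n. -/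
/-- The simple graph generated by a relation (symmetrized, loops removed). -/
def graphOfRel {V : Type} (r : V → V → Prop) : SimpleGraph V where
  Adj x y := x ≠ y ∧ (r x y ∨ r y x)
  symm := ⟨fun _ _ h => ⟨h.1.symm, h.2.symm⟩⟩
  loopless := ⟨fun _ h => h.1 rfl⟩

/-- Vertices: the `n` branch vertices of `K_n`, one subdivision vertex for each edge of
`K_n`, and one extra universal vertex. -/
abbrev SubdivKVertex (n : ℕ) : Type :=
  (Fin n ⊕ {p : Fin n × Fin n // p.1 < p.2}) ⊕ Unit

/-- Each subdivision vertex is joined to the two endpoints of its edge, and the extra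
vertex is joined to everything else. -/
def subdivKRel (n : ℕ) : SubdivKVertex n → SubdivKVertex n → Prop
  | Sum.inl (Sum.inl u), Sum.inl (Sum.inr p) => u = p.val.1 ∨ u = p.val.2
  | Sum.inr _, _ => True
  | _, _ => False

/-- `K_n` with every edge subdivided once, plus a universal vertex. -/
def subdivKUniv (n : ℕ) : SimpleGraph (SubdivKVertex n) :=
  graphOfRel (subdivKRel n)

/-- `G` has a proper conflict-free coloring with `k` colors. -/
def HasPCFColoring {V : Type} (G : SimpleGraph V) (k : ℕ) : Prop :=
  ∃ c : V → Fin k, (∀ u v : V, G.Adj u v → c u ≠ c v) ∧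
    ∀ v : V, (G.neighborSet v).Nonempty →
      ∃ i : Fin k, {u | u ∈ G.neighborSet v ∧ c u = i}.ncard = 1

/-- `G` has a strong odd coloring with `k` colors. -/
def HasStrongOddColoring {V : Type} (G : SimpleGraph V) (k : ℕ) : Prop :=
  ∃ c : V → Fin k, (∀ u v : V, G.Adj u v → c u ≠ c v) ∧
    ∀ v : V, (G.neighborSet v).Nonempty →
      ∀ i : Fin k, {u | u ∈ G.neighborSet v ∧ c u = i}.Nonempty →
        Odd {u | u ∈ G.neighborSet v ∧ c u = i}.ncard

/-! The universal vertex is the only vertex of its colour, so every other vertex sees that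
colour exactly once; the universal vertex itself sees one branch vertex painted with a fourth
colour. Conversely, in a strong odd colouring the subdivision vertex of an edge `uv` sees the
universal vertex in a colour different from `u`, so `u` and `v` must get distinct colours:
the `n` branch vertices are coloured injectively. -/

theorem SimpleGraph.ncard_neighborSet_colorClass_eq_one {V α : Type} {G : SimpleGraph V}
    {c : V → α} {v x : V} (hx : G.Adj v x) (huniq : ∀ y, c y = c x → y = x) :
    {u | u ∈ G.neighborSet v ∧ c u = c x}.ncard = 1 :=
  Set.ncard_eq_one.2
    ⟨x, Set.ext fun y => ⟨fun hy => huniq y hy.2, by rintro rfl; exact ⟨hx, rfl⟩⟩⟩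

namespace SubdivKUniv

variable {n : ℕ}

@[simp]
theorem adj_inr_inl (z : Unit) (x : Fin n ⊕ {p : Fin n × Fin n // p.1 < p.2}) :
    (subdivKUniv n).Adj (Sum.inr z) (Sum.inl x) :=
  ⟨Sum.inr_ne_inl, Or.inl trivial⟩

theorem neighborSet_subdivision (p : {p : Fin n × Fin n // p.1 < p.2}) :
    (subdivKUniv n).neighborSet (Sum.inl (Sum.inr p)) =
      {Sum.inl (Sum.inl p.1.1), Sum.inl (Sum.inl p.1.2), Sum.inr ()} := by
  ext ((u | q) | ⟨⟩) <;>
    simp [subdivKUniv, graphOfRel, subdivKRel, eq_comm]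

def pcfColoring : SubdivKVertex n → Fin 4
  | Sum.inl (Sum.inl u) => if (u : ℕ) = 0 then 3 else 1
  | Sum.inl (Sum.inr _) => 2
  | Sum.inr _ => 0

theorem pcfColoring_proper (x y : SubdivKVertex n) (h : (subdivKUniv n).Adj x y) :
    pcfColoring x ≠ pcfColoring y := by
  rcases x with (u | p) | ⟨⟩ <;> rcases y with (v | q) | ⟨⟩ <;>
    simp [subdivKUniv, graphOfRel, subdivKRel, pcfColoring] at h ⊢ <;>
    split_ifs <;> decide

theorem pcfColoring_eq_zero {x : SubdivKVertex n} (hx : pcfColoring x = 0) : x = Sum.inr () := by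
  rcases x with (u | p) | ⟨⟩
  · simp only [pcfColoring] at hx
    split_ifs at hx <;> simp at hx
  · simp [pcfColoring] at hx
  · rfl

theorem pcfColoring_eq_three {x : SubdivKVertex n} (hn : 0 < n) (hx : pcfColoring x = 3) :
    x = Sum.inl (Sum.inl ⟨0, hn⟩) := by
  rcases x with (u | p) | ⟨⟩
  · simp only [pcfColoring] at hx
    split_ifs at hx with hu
    · exact congrArg _ (congrArg _ (Fin.ext hu))
    · simp at hx
  · simp [pcfColoring] at hx
  · simp [pcfColoring] at hx

theorem hasPCFColoring : HasPCFColoring (subdivKUniv n) 4 := by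
  refine ⟨pcfColoring, pcfColoring_proper, ?_⟩
  rintro (x | ⟨⟩) ⟨y, hy⟩
  · exact ⟨0, (subdivKUniv n).ncard_neighborSet_colorClass_eq_one
      ((adj_inr_inl () x).symm) fun _ => pcfColoring_eq_zero⟩
  · have hn : 0 < n := by
      rcases y with (u | p) | ⟨⟩
      exacts [u.pos, p.1.2.pos, absurd hy (subdivKUniv n).irrefl]
    exact ⟨3, (subdivKUniv n).ncard_neighborSet_colorClass_eq_one
      (adj_inr_inl () (Sum.inl ⟨0, hn⟩)) fun _ => pcfColoring_eq_three hn⟩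

theorem strongOdd_colors_edge_ends_distinct {k : ℕ} {c : SubdivKVertex n → Fin k}
    (hproper : ∀ u v, (subdivKUniv n).Adj u v → c u ≠ c v)
    (hodd : ∀ v, ((subdivKUniv n).neighborSet v).Nonempty → ∀ i : Fin k,
      {u | u ∈ (subdivKUniv n).neighborSet v ∧ c u = i}.Nonempty →
        Odd {u | u ∈ (subdivKUniv n).neighborSet v ∧ c u = i}.ncard)
    (p : {p : Fin n × Fin n // p.1 < p.2}) :
    c (Sum.inl (Sum.inl p.1.1)) ≠ c (Sum.inl (Sum.inl p.1.2)) := by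
  intro hc
  have hu : Sum.inl (Sum.inl p.1.1) ∈ (subdivKUniv n).neighborSet (Sum.inl (Sum.inr p)) := by
    simp [neighborSet_subdivision]
  have hw : c (Sum.inr ()) ≠ c (Sum.inl (Sum.inl p.1.1)) := hproper _ _ (adj_inr_inl _ _)
  have hclass : {u | u ∈ (subdivKUniv n).neighborSet (Sum.inl (Sum.inr p)) ∧
      c u = c (Sum.inl (Sum.inl p.1.1))} =
        {Sum.inl (Sum.inl p.1.1), Sum.inl (Sum.inl p.1.2)} := by
    ext x
    simp only [neighborSet_subdivision, Set.mem_ofPred_eq, Set.mem_insert_iff,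
      Set.mem_singleton_iff]
    constructor
    · rintro ⟨hx | hx | rfl, hcx⟩
      exacts [.inl hx, .inr hx, absurd hcx hw]
    · rintro (rfl | rfl)
      exacts [⟨.inl rfl, rfl⟩, ⟨.inr (.inl rfl), hc.symm⟩]
  have hne : (Sum.inl (Sum.inl p.1.1) : SubdivKVertex n) ≠ Sum.inl (Sum.inl p.1.2) := by
    simpa using p.2.ne
  have hodd_class := hodd _ ⟨_, hu⟩ _ ⟨_, hu, rfl⟩
  rw [hclass, Set.ncard_pair hne] at hodd_class
  exact Nat.not_odd_iff_even.2 even_two hodd_class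

theorem le_of_hasStrongOddColoring {k : ℕ} (hc : HasStrongOddColoring (subdivKUniv n) k) :
    n ≤ k := by
  obtain ⟨c, hproper, hodd⟩ := hc
  have hinj : Function.Injective fun u : Fin n => c (Sum.inl (Sum.inl u)) := by
    intro u v huv
    by_contra hne
    rcases lt_or_gt_of_ne hne with h | h
    · exact strongOdd_colors_edge_ends_distinct hproper hodd ⟨(u, v), h⟩ huv
    · exact strongOdd_colors_edge_ends_distinct hproper hodd ⟨(v, u), h⟩ huv.symm
  simpa using Fintype.card_le_of_injective _ hinj

end SubdivKUniv

theorem subdivided_clique_universal_pcf_strongOdd_general (n : ℕ) :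
    HasPCFColoring (subdivKUniv n) 4 ∧
      ∀ k : ℕ, HasStrongOddColoring (subdivKUniv n) k → n ≤ k :=
  ⟨SubdivKUniv.hasPCFColoring, fun _ => SubdivKUniv.le_of_hasStrongOddColoring⟩

/-- For the graph obtained from `K_n` by subdividing every edge once and adding a universal
vertex, `χ_pcf ≤ 4` and `χ_so ≥ n`. -/
theorem subdivided_clique_universal_pcf_strongOdd (n : ℕ) (hn : 2 ≤ n) :
    HasPCFColoring (subdivKUniv n) 4 ∧
      ∀ k : ℕ, HasStrongOddColoring (subdivKUniv n) k → n ≤ k :=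
  subdivided_clique_universal_pcf_strongOdd_general n
end
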